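/- arXiv:2102.06620 — 8 statements merged into one kernel-verified Lean document; each statement's English description precedes it below -/
import Mathlib

section
/- Let E be a complete separable metric space carrying a continuous scaling, and let F ⊆ E be a closed cone with d(x,F) < d(u•x,F) for all u > 1 and x ∉ F. Let X be an E-valued random element that is regularly varying on E∖F with limit measure μ: there is a function b : (0,∞) → (0,∞) with b(x) → ∞ such that b(x)·E[f(x⁻¹•X)] → ∫ f dμ as x → ∞ for every bounded continuous f : E → ℝ vanishing on F^r for some r > 0, where μ is a nonzero measure in M(E∖F). Let A ⊆ E be a Borel set bounded away from F with μ(A) > 0 and μ(∂A) = 0. Then for every bounded continuous g : E → ℝ, E[g(x⁻¹•X)·1{x⁻¹•X ∈ A}] / P(x⁻¹•X ∈ A) → (1/μ(A))·∫_A g dμ as x → ∞; that is, the conditional law of x⁻¹•X given x⁻¹•X ∈ A converges weakly to μ(A ∩ ·)/μ(A). -/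
/-!
The measures `ν x := b x • law (x⁻¹ • X)` converge to `μ` against bounded continuous functions
vanishing near `F`. For `A` bounded away from `F` the discontinuous integrand `1_A g` is squeezed
between such test functions: with `T_δ` the `δ`-thickened indicator,
`|1_A g - T_δ(A) g| ≤ C (T_δ(A) + T_δ(Aᶜ) - 1)`, and the right-hand side tends to `C • 1_{∂A}`,
which is `μ`-null. Hence `∫_A g dν x → ∫_A g dμ`; for `g = 1` this gives `ν x A → μ A > 0`, and
the factor `b x` cancels in the ratio.
-/

open MeasureTheory Filter Metric Topology

theorem tendsto_of_abs_sub_le {ι κ : Type*} {l : Filter ι} {l' : Filter κ} [l'.NeBot]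
    {a : ι → ℝ} {a₀ : ℝ} {b c : κ → ι → ℝ} {b₀ c₀ : κ → ℝ}
    (hab : ∀ k i, |a i - b k i| ≤ c k i) (hab₀ : ∀ k, |a₀ - b₀ k| ≤ c₀ k)
    (hb : ∀ k, Tendsto (b k) l (𝓝 (b₀ k))) (hc : ∀ k, Tendsto (c k) l (𝓝 (c₀ k)))
    (hc₀ : Tendsto c₀ l' (𝓝 0)) :
    Tendsto a l (𝓝 a₀) := by
  rw [Metric.tendsto_nhds]
  intro η hη
  obtain ⟨k, hk⟩ := (hc₀.eventually (gt_mem_nhds (by positivity : 0 < η / 4))).exists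
  filter_upwards [Metric.tendsto_nhds.1 (hb k) _ (by positivity : 0 < η / 4),
    Metric.tendsto_nhds.1 (hc k) _ (by positivity : 0 < η / 4)] with i hbi hci
  rw [Real.dist_eq] at hbi hci ⊢
  calc |a i - a₀| ≤ |a i - b k i| + |b k i - b₀ k| + |a₀ - b₀ k| := by
        linarith [abs_sub_le (a i) (b k i) a₀, abs_sub_le (b k i) (b₀ k) a₀,
          abs_sub_comm a₀ (b₀ k)]
    _ ≤ c k i + |b k i - b₀ k| + c₀ k := by gcongr <;> solve_by_elim
    _ < η := by linarith [abs_sub_lt_iff.1 hci]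

theorem abs_integral_sub_integral_le {Ω : Type*} [MeasurableSpace Ω] {ρ : Measure Ω}
    {φ u w : Ω → ℝ} (hφ : Integrable φ ρ) (hu : Integrable u ρ) (hw : Integrable w ρ)
    (h : ∀ x, |φ x - u x| ≤ w x) :
    |∫ x, φ x ∂ρ - ∫ x, u x ∂ρ| ≤ ∫ x, w x ∂ρ := by
  rw [← integral_sub hφ hu]
  exact norm_integral_le_of_norm_le hw (ae_of_all _ fun x => (Real.norm_eq_abs _).trans_le (h x))

section FrontierApprox

variable {α : Type*} [PseudoEMetricSpace α] {δ : ℝ}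

noncomputable def frontierApprox (hδ : 0 < δ) (s : Set α) (x : α) : ℝ :=
  thickenedIndicator hδ s x + thickenedIndicator hδ sᶜ x - 1

theorem continuous_frontierApprox (hδ : 0 < δ) (s : Set α) :
    Continuous (frontierApprox hδ s) := by
  unfold frontierApprox
  fun_prop

theorem frontierApprox_nonneg (hδ : 0 < δ) (s : Set α) (x : α) : 0 ≤ frontierApprox hδ s x := by
  unfold frontierApprox
  by_cases hx : x ∈ s
  · simp [thickenedIndicator_one hδ s hx]
  · simp [thickenedIndicator_one hδ sᶜ (Set.mem_compl hx)]

theorem frontierApprox_le_one (hδ : 0 < δ) (s : Set α) (x : α) : frontierApprox hδ s x ≤ 1 := by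
  have h₁ : (thickenedIndicator hδ s x : ℝ) ≤ 1 := mod_cast thickenedIndicator_le_one hδ s x
  have h₂ : (thickenedIndicator hδ sᶜ x : ℝ) ≤ 1 := mod_cast thickenedIndicator_le_one hδ sᶜ x
  unfold frontierApprox
  linarith

theorem frontierApprox_eq_zero_of_notMem_thickening (hδ : 0 < δ) {s : Set α} {x : α}
    (hx : x ∉ thickening δ s) : frontierApprox hδ s x = 0 := by
  have hxs : x ∈ sᶜ := fun h => hx (self_subset_thickening hδ s h)
  simp [frontierApprox, thickenedIndicator_zero hδ s hx, thickenedIndicator_one hδ sᶜ hxs]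

theorem tendsto_thickenedIndicator_of_notMem_closure {δ : ℕ → ℝ} (hδ : ∀ n, 0 < δ n)
    (hδ₀ : Tendsto δ atTop (𝓝 0)) {s : Set α} {x : α} (hx : x ∉ closure s) :
    Tendsto (fun n => (thickenedIndicator (hδ n) s x : ℝ)) atTop (𝓝 0) := by
  have := tendsto_pi_nhds.1 (thickenedIndicator_tendsto_indicator_closure hδ hδ₀ s) x
  rw [Set.indicator_of_notMem hx] at this
  exact NNReal.tendsto_coe.2 this

theorem tendsto_frontierApprox_of_notMem_frontier {δ : ℕ → ℝ} (hδ : ∀ n, 0 < δ n)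
    (hδ₀ : Tendsto δ atTop (𝓝 0)) {s : Set α} {x : α} (hx : x ∉ frontier s) :
    Tendsto (fun n => frontierApprox (hδ n) s x) atTop (𝓝 0) := by
  rw [frontier_eq_closure_inter_closure, Set.mem_inter_iff, not_and_or] at hx
  rcases hx with hx | hx
  · have hxs : x ∈ sᶜ := fun h => hx (subset_closure h)
    simpa [frontierApprox, thickenedIndicator_one _ sᶜ hxs] using
      tendsto_thickenedIndicator_of_notMem_closure hδ hδ₀ hx
  · have hxs : x ∈ s := by_contra fun h => hx (subset_closure h)
    simpa [frontierApprox, thickenedIndicator_one _ s hxs] using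
      tendsto_thickenedIndicator_of_notMem_closure hδ hδ₀ hx

theorem abs_indicator_sub_thickenedIndicator_mul_le (hδ : 0 < δ) {s : Set α} {g : α → ℝ}
    {C : ℝ} (hC : ∀ x, |g x| ≤ C) (x : α) :
    |s.indicator g x - thickenedIndicator hδ s x * g x| ≤ C * frontierApprox hδ s x := by
  by_cases hx : x ∈ s
  · simp only [Set.indicator_of_mem hx, thickenedIndicator_one hδ s hx, NNReal.coe_one, one_mul,
      sub_self, abs_zero]
    exact mul_nonneg ((abs_nonneg _).trans (hC x)) (frontierApprox_nonneg hδ s x)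
  · simp only [Set.indicator_of_notMem hx, frontierApprox,
      thickenedIndicator_one hδ sᶜ (Set.mem_compl hx), NNReal.coe_one, add_sub_cancel_right,
      zero_sub, abs_neg, abs_mul, NNReal.abs_eq, mul_comm C]
    exact mul_le_mul_of_nonneg_left (hC x) (NNReal.coe_nonneg _)

end FrontierApprox

section AwayFrom

variable {E : Type*} [PseudoMetricSpace E] {F A : Set E} {r : ℝ}

theorem notMem_thickening_of_infDist_add_le (hAF : ∀ a ∈ A, r ≤ infDist a F) {δ : ℝ} {x : E}
    (hx : infDist x F + δ ≤ r) : x ∉ thickening δ A := by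
  intro hxA
  obtain ⟨a, ha, hxa⟩ := mem_thickening_iff.1 hxA
  have := infDist_le_infDist_add_dist (x := a) (y := x) (s := F)
  linarith [hAF a ha, dist_comm a x]

variable [MeasurableSpace E] [OpensMeasurableSpace E] {μ : Measure E}

theorem integrable_of_eq_zero_of_infDist_lt (hμF : ∀ r > 0, μ {x | r ≤ infDist x F} ≠ ⊤)
    {f : E → ℝ} (hf : AEStronglyMeasurable f μ) {C : ℝ} (hC : ∀ x, |f x| ≤ C) (hr : 0 < r)
    (h₀ : ∀ x, infDist x F < r → f x = 0) : Integrable f μ := by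
  have hS : MeasurableSet {x | r ≤ infDist x F} :=
    measurableSet_le measurable_const (continuous_infDist_pt F).measurable
  have hfS : {x | r ≤ infDist x F}.indicator f = f :=
    Set.indicator_eq_self.2 fun x hx => not_lt.1 fun h => hx (h₀ x h)
  rw [← hfS, integrable_indicator_iff hS]
  exact Measure.integrableOn_of_bounded (hμF r hr) hf (ae_of_all _ hC)

theorem tendsto_integral_frontierApprox (hμF : ∀ r > 0, μ {x | r ≤ infDist x F} ≠ ⊤)
    (hr : 0 < r) (hAF : ∀ a ∈ A, r ≤ infDist a F) (hAμ : μ (frontier A) = 0)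
    {δ : ℕ → ℝ} (hδ : ∀ n, 0 < δ n) (hδr : ∀ n, δ n ≤ r / 2) (hδ₀ : Tendsto δ atTop (𝓝 0)) :
    Tendsto (fun n => ∫ x, frontierApprox (hδ n) A x ∂μ) atTop (𝓝 0) := by
  set S := {x | r / 2 ≤ infDist x F}
  have hS : MeasurableSet S :=
    measurableSet_le measurable_const (continuous_infDist_pt F).measurable
  have hvanish : ∀ n x, infDist x F < r / 2 → frontierApprox (hδ n) A x = 0 := fun n x hx =>
    frontierApprox_eq_zero_of_notMem_thickening _
      (notMem_thickening_of_infDist_add_le hAF (by linarith [hδr n]))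
  have hbound : ∀ n x, |frontierApprox (hδ n) A x| ≤ S.indicator 1 x := fun n x => by
    by_cases hx : r / 2 ≤ infDist x F
    · rw [Set.indicator_of_mem (show x ∈ S from hx), abs_of_nonneg (frontierApprox_nonneg _ _ _)]
      exact frontierApprox_le_one _ _ _
    · rw [hvanish n x (not_le.1 hx), Set.indicator_of_notMem (show x ∉ S from hx), abs_zero]
  have hS_int : Integrable (S.indicator 1) μ :=
    integrable_of_eq_zero_of_infDist_lt hμF (measurable_one.indicator hS).aestronglyMeasurable
      (C := 1) (fun x => by by_cases hx : x ∈ S <;> simp [hx]) (half_pos hr)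
      (fun x hx => Set.indicator_of_notMem (show x ∉ S from not_le.2 hx) _)
  simpa using tendsto_integral_of_dominated_convergence (S.indicator 1)
    (fun n => (continuous_frontierApprox (hδ n) A).aestronglyMeasurable) hS_int
    (fun n => ae_of_all _ (hbound n))
    ((measure_eq_zero_iff_ae_notMem.1 hAμ).mono fun x hx =>
      tendsto_frontierApprox_of_notMem_frontier hδ hδ₀ hx)

theorem tendsto_setIntegral_of_null_frontier {ι : Type*} {l : Filter ι} {ν : ι → Measure E}
    (hνF : ∀ i, ∀ r > 0, ν i {x | r ≤ infDist x F} ≠ ⊤)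
    (hμF : ∀ r > 0, μ {x | r ≤ infDist x F} ≠ ⊤)
    (hνμ : ∀ f : E → ℝ, Continuous f → (∃ C, ∀ x, |f x| ≤ C) →
      (∃ r > (0 : ℝ), ∀ x, infDist x F < r → f x = 0) →
      Tendsto (fun i => ∫ x, f x ∂ν i) l (𝓝 (∫ x, f x ∂μ)))
    (hA : MeasurableSet A) (hr : 0 < r) (hAF : ∀ a ∈ A, r ≤ infDist a F)
    (hAμ : μ (frontier A) = 0) {g : E → ℝ} (hg : Continuous g) {C : ℝ} (hC : ∀ x, |g x| ≤ C) :
    Tendsto (fun i => ∫ x in A, g x ∂ν i) l (𝓝 (∫ x in A, g x ∂μ)) := by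
  obtain ⟨δ, -, hδ, hδ₀⟩ := exists_seq_strictAnti_tendsto' (half_pos hr)
  have hthick : ∀ n x, infDist x F < r / 2 → x ∉ thickening (δ n) A := fun n x hx =>
    notMem_thickening_of_infDist_add_le hAF (by linarith [(hδ n).2])
  have hC₀ : ∀ x, 0 ≤ C := fun x => (abs_nonneg _).trans (hC x)
  set u : ℕ → E → ℝ := fun n x => thickenedIndicator (hδ n).1 A x * g x
  set w : ℕ → E → ℝ := fun n x => C * frontierApprox (hδ n).1 A x
  have hu : ∀ n, Continuous (u n) := fun n => by fun_prop
  have hw : ∀ n, Continuous (w n) := fun n => (continuous_frontierApprox _ A).const_mul C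
  have huC : ∀ n x, |u n x| ≤ C := fun n x => by
    rw [abs_mul, NNReal.abs_eq]
    exact (mul_le_of_le_one_left (abs_nonneg _) (mod_cast thickenedIndicator_le_one _ A x)).trans
      (hC x)
  have hwC : ∀ n x, |w n x| ≤ C := fun n x => by
    rw [abs_mul, abs_of_nonneg (hC₀ x), abs_of_nonneg (frontierApprox_nonneg _ A x)]
    exact mul_le_of_le_one_right (hC₀ x) (frontierApprox_le_one _ A x)
  have hu₀ : ∀ n x, infDist x F < r / 2 → u n x = 0 := fun n x hx => by
    simp only [u, thickenedIndicator_zero _ A (hthick n x hx), NNReal.coe_zero, zero_mul]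
  have hw₀ : ∀ n x, infDist x F < r / 2 → w n x = 0 := fun n x hx => by
    simp only [w, frontierApprox_eq_zero_of_notMem_thickening _ (hthick n x hx), mul_zero]
  have hφ₀ : ∀ x, infDist x F < r → A.indicator g x = 0 := fun x hx =>
    Set.indicator_of_notMem (fun hxA => absurd (hAF x hxA) (not_le.2 hx)) _
  have hsandwich : ∀ ρ : Measure E, (∀ r > 0, ρ {x | r ≤ infDist x F} ≠ ⊤) → ∀ n,
      |∫ x, A.indicator g x ∂ρ - ∫ x, u n x ∂ρ| ≤ ∫ x, w n x ∂ρ := fun ρ hρ n =>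
    abs_integral_sub_integral_le
      (integrable_of_eq_zero_of_infDist_lt hρ (hg.measurable.indicator hA).aestronglyMeasurable
        (fun x => (norm_indicator_le_norm_self g x).trans (hC x)) hr hφ₀)
      (integrable_of_eq_zero_of_infDist_lt hρ (hu n).aestronglyMeasurable (huC n) (half_pos hr)
        (hu₀ n))
      (integrable_of_eq_zero_of_infDist_lt hρ (hw n).aestronglyMeasurable (hwC n) (half_pos hr)
        (hw₀ n))
      (abs_indicator_sub_thickenedIndicator_mul_le _ hC)
  simp_rw [← integral_indicator hA]
  refine tendsto_of_abs_sub_le (l' := atTop) (fun n i => hsandwich (ν i) (hνF i) n)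
    (hsandwich μ hμF)
    (fun n => hνμ _ (hu n) ⟨C, huC n⟩ ⟨r / 2, half_pos hr, hu₀ n⟩)
    (fun n => hνμ _ (hw n) ⟨C, hwC n⟩ ⟨r / 2, half_pos hr, hw₀ n⟩) ?_
  simpa [w, integral_const_mul] using
    (tendsto_integral_frontierApprox hμF hr hAF hAμ (fun n => (hδ n).1) (fun n => (hδ n).2.le)
      hδ₀).const_mul C

end AwayFrom

section Pushforward

variable {Ω E : Type*} [MeasurableSpace Ω] [MeasurableSpace E] {P : Measure Ω} {Y : Ω → E}
  {c : ℝ}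

theorem integral_toNNReal_smul_map (hY : Measurable Y) (hc : 0 ≤ c) {f : E → ℝ}
    (hf : AEStronglyMeasurable f (P.map Y)) :
    ∫ y, f y ∂(c.toNNReal • P.map Y) = c * ∫ ω, f (Y ω) ∂P := by
  rw [integral_smul_nnreal_measure, integral_map hY.aemeasurable hf, NNReal.smul_def,
    Real.coe_toNNReal _ hc, smul_eq_mul]

theorem setIntegral_div_measureReal_toNNReal_smul_map (hY : Measurable Y) (hc : 0 < c)
    {A : Set E} (hA : MeasurableSet A) {g : E → ℝ} (hg : Measurable g) :
    (∫ y in A, g y ∂(c.toNNReal • P.map Y)) / (c.toNNReal • P.map Y).real A =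
      (∫ ω, {ω | Y ω ∈ A}.indicator (fun ω => g (Y ω)) ω ∂P) / (P {ω | Y ω ∈ A}).toReal := by
  have hnum : ∫ y in A, g y ∂(c.toNNReal • P.map Y) =
      c * ∫ ω, {ω | Y ω ∈ A}.indicator (fun ω => g (Y ω)) ω ∂P := by
    rw [← integral_indicator hA,
      integral_toNNReal_smul_map hY hc.le (hg.indicator hA).aestronglyMeasurable]
    rfl
  have hden : (c.toNNReal • P.map Y).real A = c * (P {ω | Y ω ∈ A}).toReal := by
    rw [measureReal_nnreal_smul_apply, Real.coe_toNNReal _ hc.le, measureReal_def,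
      Measure.map_apply hY hA]
    rfl
  rw [hnum, hden, mul_div_mul_left _ _ hc.ne']

end Pushforward

theorem stmt_1_general
    {E : Type*} [MetricSpace E]
    [MeasurableSpace E] [BorelSpace E]
    {Ω : Type*} [MeasurableSpace Ω] (P : Measure Ω) [IsProbabilityMeasure P]
    (σ : ℝ → E → E)
    (hσc : ContinuousOn (fun p : ℝ × E => σ p.1 p.2) (Set.Ioi (0 : ℝ) ×ˢ Set.univ))
    (F : Set E)
    (X : Ω → E) (hX : Measurable X)
    (b : ℝ → ℝ) (hb : ∀ x : ℝ, 0 < x → 0 < b x)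
    (μ : Measure E)
    (hμFin : ∀ r > (0 : ℝ), μ {x | r ≤ infDist x F} ≠ ⊤)
    (hRV : ∀ f : E → ℝ, Continuous f → (∃ C, ∀ x, |f x| ≤ C) →
      (∃ r > (0 : ℝ), ∀ x, infDist x F < r → f x = 0) →
      Tendsto (fun x : ℝ => b x * ∫ ω, f (σ x⁻¹ (X ω)) ∂P) atTop (𝓝 (∫ y, f y ∂μ)))
    (A : Set E) (hA : MeasurableSet A)
    (hAaway : ∃ r > (0 : ℝ), ∀ a ∈ A, r ≤ infDist a F)
    (hApos : 0 < μ A) (hAbd : μ (frontier A) = 0) :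
    ∀ g : E → ℝ, Continuous g → (∃ C, ∀ x, |g x| ≤ C) →
      Tendsto (fun x : ℝ =>
          (∫ ω, Set.indicator {ω | σ x⁻¹ (X ω) ∈ A} (fun ω => g (σ x⁻¹ (X ω))) ω ∂P) /
            (P {ω | σ x⁻¹ (X ω) ∈ A}).toReal)
        atTop (𝓝 ((∫ y in A, g y ∂μ) / (μ A).toReal)) := by
  rintro g hg ⟨C, hC⟩
  obtain ⟨r, hr, hAF⟩ := hAaway
  have hY : ∀ x : ℝ, 0 < x → Measurable fun ω => σ x⁻¹ (X ω) := fun x hx =>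
    (hσc.comp_continuous (continuous_const.prodMk continuous_id)
      fun _ => ⟨inv_pos.2 hx, trivial⟩).measurable.comp hX
  set ν : ℝ → Measure E := fun x => (b x).toNNReal • P.map fun ω => σ x⁻¹ (X ω)
  have hνμ : ∀ f : E → ℝ, Continuous f → (∃ C, ∀ x, |f x| ≤ C) →
      (∃ r > (0 : ℝ), ∀ x, infDist x F < r → f x = 0) →
      Tendsto (fun x => ∫ y, f y ∂ν x) atTop (𝓝 (∫ y, f y ∂μ)) := fun f hf hfC hf₀ =>
    (hRV f hf hfC hf₀).congr' <| (eventually_gt_atTop 0).mono fun x hx =>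
      (integral_toNNReal_smul_map (hY x hx) (hb x hx).le hf.aestronglyMeasurable).symm
  have hνF : ∀ x, ∀ r > (0 : ℝ), ν x {y | r ≤ infDist y F} ≠ ⊤ := fun x _ _ => measure_ne_top _ _
  have hnum := tendsto_setIntegral_of_null_frontier hνF hμFin hνμ hA hr hAF hAbd hg hC
  have hden := tendsto_setIntegral_of_null_frontier hνF hμFin hνμ hA hr hAF hAbd
    continuous_const (g := fun _ => (1 : ℝ)) (C := 1) (fun _ => by norm_num)
  simp only [setIntegral_const, smul_eq_mul, mul_one] at hden
  have hμA : μ.real A ≠ 0 :=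
    (ENNReal.toReal_pos hApos.ne' (measure_ne_top_of_subset hAF (hμFin r hr))).ne'
  refine (hnum.div hden hμA).congr' <| (eventually_gt_atTop 0).mono fun x hx => ?_
  exact setIntegral_div_measureReal_toNNReal_smul_map (hY x hx) (hb x hx) hA hg.measurable

/-- Conditional limit theorem under regular variation on `E∖F`
(Proposition 2.2 of the paper). -/
theorem stmt_1
    {E : Type*} [MetricSpace E] [CompleteSpace E] [TopologicalSpace.SeparableSpace E]
    [MeasurableSpace E] [BorelSpace E]
    {Ω : Type*} [MeasurableSpace Ω] (P : Measure Ω) [IsProbabilityMeasure P]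
    (σ : ℝ → E → E)
    (hσc : ContinuousOn (fun p : ℝ × E => σ p.1 p.2) (Set.Ioi (0 : ℝ) ×ˢ Set.univ))
    (hσ1 : ∀ x, σ 1 x = x)
    (hσm : ∀ u v : ℝ, 0 < u → 0 < v → ∀ x, σ u (σ v x) = σ (u * v) x)
    (F : Set E) (hFclosed : IsClosed F)
    (hFcone : ∀ x ∈ F, ∀ u : ℝ, 0 < u → σ u x ∈ F)
    (hFdist : ∀ u : ℝ, 1 < u → ∀ x ∉ F, infDist x F < infDist (σ u x) F)
    (X : Ω → E) (hX : Measurable X)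
    (b : ℝ → ℝ) (hb : ∀ x : ℝ, 0 < x → 0 < b x) (hbTop : Tendsto b atTop atTop)
    (μ : Measure E) (hμ0 : μ ≠ 0)
    (hμFin : ∀ r > (0 : ℝ), μ {x | r ≤ infDist x F} ≠ ⊤)
    (hRV : ∀ f : E → ℝ, Continuous f → (∃ C, ∀ x, |f x| ≤ C) →
      (∃ r > (0 : ℝ), ∀ x, infDist x F < r → f x = 0) →
      Tendsto (fun x : ℝ => b x * ∫ ω, f (σ x⁻¹ (X ω)) ∂P) atTop (𝓝 (∫ y, f y ∂μ)))
    (A : Set E) (hA : MeasurableSet A)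
    (hAaway : ∃ r > (0 : ℝ), ∀ a ∈ A, r ≤ infDist a F)
    (hApos : 0 < μ A) (hAbd : μ (frontier A) = 0) :
    ∀ g : E → ℝ, Continuous g → (∃ C, ∀ x, |g x| ≤ C) →
      Tendsto (fun x : ℝ =>
          (∫ ω, Set.indicator {ω | σ x⁻¹ (X ω) ∈ A} (fun ω => g (σ x⁻¹ (X ω))) ω ∂P) /
            (P {ω | σ x⁻¹ (X ω) ∈ A}).toReal)
        atTop (𝓝 ((∫ y in A, g y ∂μ) / (μ A).toReal)) :=
  stmt_1_general P σ hσc F X hX b hb μ hμFin hRV A hA hAaway hApos hAbd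
end

section
/- Let E be a complete separable metric space, F ⊆ E a closed set, and let μ_n (n ≥ 1) and μ be measures in M(E∖F). The following are equivalent: (i) ∫ f dμ_n → ∫ f dμ as n → ∞ for every bounded continuous f : E → ℝ vanishing on F^r for some r > 0; (ii) for every Borel set A ⊆ E bounded away from F, μ(int A) ≤ liminf_{n→∞} μ_n(A) ≤ limsup_{n→∞} μ_n(A) ≤ μ(cl A), where int A, cl A denote the interior and closure of A. -/
open MeasureTheory Filter Metric Topology Set
open scoped ENNReal NNReal BoundedContinuousFunction

/-!
(i) ⇒ (ii): a closed set `C` bounded away from `F` is the decreasing limit of its thickened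
indicators, and an open set `U` the increasing limit of `min 1 (k · d(·, Uᶜ))`; for small
thickening radii all of these test functions vanish near `F`, so their integrals converge by (i),
and this bounds `limsup μₙ(C)` from above and `liminf μₙ(U)` from below.

(ii) ⇒ (i): splitting `f = f⁺ - f⁻`, it suffices to treat `f ≥ 0`. Its superlevel sets
`{t < f}` and `{t ≤ f}`, `t > 0`, are open, resp. closed, and bounded away from `F`, so the
layer-cake formula turns (ii) into `liminf` and `limsup` bounds for `∫ f dμₙ`. The `limsup` bound
is reverse Fatou, whose dominating function comes from `limsup μₙ(E∖F^r) ≤ μ(E∖F^r) < ∞`.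
-/

section Approximation

variable {Ω : Type*} [MeasurableSpace Ω] {μs : ℕ → Measure Ω} {μ : Measure Ω}

lemma tendsto_integral_iff_tendsto_lintegral_ofReal {ι : Type*} {L : Filter ι}
    {νs : ι → Measure Ω} {ν : Measure Ω} {g : Ω → ℝ} (hg0 : 0 ≤ g)
    (hνs : ∀ i, Integrable g (νs i)) (hν : Integrable g ν) :
    Tendsto (fun i => ∫ x, g x ∂νs i) L (𝓝 (∫ x, g x ∂ν)) ↔
      Tendsto (fun i => ∫⁻ x, ENNReal.ofReal (g x) ∂νs i) L
        (𝓝 (∫⁻ x, ENNReal.ofReal (g x) ∂ν)) := by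
  have h : ∀ ρ : Measure Ω, Integrable g ρ →
      ∫ x, g x ∂ρ = (∫⁻ x, ENNReal.ofReal (g x) ∂ρ).toReal := fun ρ hρ =>
    integral_eq_lintegral_of_nonneg_ae (ae_of_all _ hg0) hρ.aestronglyMeasurable
  rw [funext fun i => h _ (hνs i), h _ hν]
  exact ENNReal.tendsto_toReal_iff (fun i => (hνs i).lintegral_lt_top.ne) hν.lintegral_lt_top.ne

lemma limsup_measure_le_of_tendsto_lintegral {A : Set Ω} (hA : MeasurableSet A)
    {g : ℕ → Ω → ℝ≥0∞} (hgA : ∀ k, A.indicator 1 ≤ g k)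
    (hconv : ∀ k, Tendsto (fun n => ∫⁻ x, g k x ∂μs n) atTop (𝓝 (∫⁻ x, g k x ∂μ)))
    (hlim : Tendsto (fun k => ∫⁻ x, g k x ∂μ) atTop (𝓝 (μ A))) :
    limsup (fun n => μs n A) atTop ≤ μ A := by
  refine ge_of_tendsto' hlim fun k => ?_
  calc limsup (fun n => μs n A) atTop
      ≤ limsup (fun n => ∫⁻ x, g k x ∂μs n) atTop := by
        refine limsup_le_limsup (Eventually.of_forall fun n => ?_)
        exact (lintegral_indicator_one hA).symm.trans_le (lintegral_mono (hgA k))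
    _ = ∫⁻ x, g k x ∂μ := (hconv k).limsup_eq

lemma le_liminf_measure_of_tendsto_lintegral {A : Set Ω} (hA : MeasurableSet A)
    {g : ℕ → Ω → ℝ≥0∞} (hgA : ∀ k, g k ≤ A.indicator 1)
    (hconv : ∀ k, Tendsto (fun n => ∫⁻ x, g k x ∂μs n) atTop (𝓝 (∫⁻ x, g k x ∂μ)))
    (hlim : Tendsto (fun k => ∫⁻ x, g k x ∂μ) atTop (𝓝 (μ A))) :
    μ A ≤ liminf (fun n => μs n A) atTop := by
  refine le_of_tendsto' hlim fun k => ?_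
  calc ∫⁻ x, g k x ∂μ = liminf (fun n => ∫⁻ x, g k x ∂μs n) atTop := (hconv k).liminf_eq.symm
    _ ≤ liminf (fun n => μs n A) atTop := by
        refine liminf_le_liminf (Eventually.of_forall fun n => ?_)
        exact (lintegral_mono (hgA k)).trans_eq (lintegral_indicator_one hA)

lemma limsup_lintegral_le_of_forall_limsup_measure_le {f : Ω → ℝ} (hf : Measurable f)
    (hf0 : 0 ≤ f) {C : ℝ} (hfC : ∀ x, f x ≤ C) {M : ℝ≥0∞} (hM : M ≠ ⊤)
    (hμs : ∀ᶠ n in atTop, μs n {x | 0 < f x} ≤ M)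
    (h : ∀ t > 0, limsup (fun n => μs n {x | t ≤ f x}) atTop ≤ μ {x | t ≤ f x}) :
    limsup (fun n => ∫⁻ x, ENNReal.ofReal (f x) ∂μs n) atTop ≤
      ∫⁻ x, ENNReal.ofReal (f x) ∂μ := by
  obtain ⟨N, hN⟩ := eventually_atTop.1 hμs
  have hlayer : ∀ ν : Measure Ω,
      ∫⁻ x, ENNReal.ofReal (f x) ∂ν = ∫⁻ t in Ioi 0, ν {x | t ≤ f x} := fun ν =>
    lintegral_eq_lintegral_meas_le ν (ae_of_all _ hf0) hf.aemeasurable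
  have hmeas : ∀ ν : Measure Ω, Measurable fun t : ℝ => ν {x | t ≤ f x} := fun ν =>
    Antitone.measurable fun s t hst => measure_mono fun x (hx : t ≤ f x) => hst.trans hx
  have hbound : ∀ n, (fun t => μs (n + N) {x | t ≤ f x}) ≤ᵐ[volume.restrict (Ioi 0)]
      (Ioc 0 C).indicator fun _ => M := by
    refine fun n => (ae_restrict_iff' measurableSet_Ioi).2 (ae_of_all _ fun t (ht : 0 < t) => ?_)
    by_cases htC : t ≤ C
    · rw [indicator_of_mem (show t ∈ Ioc 0 C from ⟨ht, htC⟩)]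
      exact (measure_mono fun x (hx : t ≤ f x) => ht.trans_le hx).trans (hN _ (by omega))
    · have : {x | t ≤ f x} = ∅ := eq_empty_of_forall_notMem fun x (hx : t ≤ f x) =>
        htC (hx.trans (hfC x))
      simp [this]
  have hfin : ∫⁻ t in Ioi 0, (Ioc 0 C).indicator (fun _ => M) t ≠ ⊤ := by
    refine ne_top_of_le_ne_top ?_ (setLIntegral_le_lintegral _ _)
    rw [lintegral_indicator_const measurableSet_Ioc]
    exact ENNReal.mul_ne_top hM measure_Ioc_lt_top.ne
  simp_rw [hlayer]
  rw [← limsup_nat_add _ N]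
  calc limsup (fun n => ∫⁻ t in Ioi 0, μs (n + N) {x | t ≤ f x}) atTop
      ≤ ∫⁻ t in Ioi 0, limsup (fun n => μs (n + N) {x | t ≤ f x}) atTop :=
        limsup_lintegral_le _ (fun n => hmeas _) hbound hfin
    _ ≤ ∫⁻ t in Ioi 0, μ {x | t ≤ f x} := by
        refine setLIntegral_mono' measurableSet_Ioi fun t ht => ?_
        rw [limsup_nat_add (fun n => μs n {x | t ≤ f x}) N]
        exact h t ht

end Approximation

section AwayFrom

variable {E : Type*} [MetricSpace E] {F : Set E}

lemma le_infDist_sub_of_mem_thickening {C : Set E} {r δ : ℝ}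
    (hC : ∀ c ∈ C, r ≤ infDist c F) {x : E} (hx : x ∈ thickening δ C) :
    r - δ ≤ infDist x F := by
  obtain ⟨c, hc, hxc⟩ := mem_thickening_iff.1 hx
  have := infDist_le_infDist_add_dist (x := c) (y := x) (s := F)
  rw [dist_comm] at this
  linarith [hC c hc]

lemma nonempty_compl_of_le_infDist {U : Set E} {r : ℝ} (hr : 0 < r)
    (hU : ∀ a ∈ U, r ≤ infDist a F) (hne : U.Nonempty) : Uᶜ.Nonempty := by
  obtain ⟨a, ha⟩ := hne
  obtain ⟨y, hy⟩ : F.Nonempty := by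
    by_contra! hF
    have := hU a ha
    rw [hF, infDist_empty] at this
    linarith
  refine ⟨y, fun hyU => ?_⟩
  have := hU y hyU
  rw [infDist_zero_of_mem hy] at this
  linarith

lemma tendsto_ofReal_min_one_mul_infDist_compl {U : Set E} (hU : IsOpen U) (hUc : Uᶜ.Nonempty)
    (x : E) :
    Tendsto (fun k : ℕ => ENNReal.ofReal (min 1 (k * infDist x Uᶜ))) atTop
      (𝓝 (U.indicator 1 x)) := by
  by_cases hx : x ∈ U
  · have hpos : 0 < infDist x Uᶜ :=
      (hU.isClosed_compl.notMem_iff_infDist_pos hUc).1 (not_not.2 hx)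
    have : (fun k : ℕ => ENNReal.ofReal (min 1 (k * infDist x Uᶜ))) =ᶠ[atTop] fun _ => 1 := by
      filter_upwards [(tendsto_natCast_atTop_atTop.atTop_mul_const hpos).eventually_ge_atTop 1]
        with k hk
      simp [min_eq_left hk]
    simpa [hx] using tendsto_const_nhds.congr' this.symm
  · simp [hx, infDist_zero_of_mem (s := Uᶜ) hx]

variable [MeasurableSpace E]

/-- `μ ∈ M(E∖F)`. -/
def IsFiniteAwayFrom (F : Set E) (μ : Measure E) : Prop :=
  ∀ r > (0 : ℝ), μ {x | r ≤ infDist x F} ≠ ⊤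

/-- `μn → μ` in `M(E∖F)`. -/
def TendstoAwayFrom (F : Set E) (μn : ℕ → Measure E) (μ : Measure E) : Prop :=
  ∀ f : E → ℝ, Continuous f → (∃ C, ∀ x, |f x| ≤ C) →
    (∃ r > (0 : ℝ), ∀ x, infDist x F < r → f x = 0) →
    Tendsto (fun n : ℕ => ∫ x, f x ∂(μn n)) atTop (𝓝 (∫ x, f x ∂μ))

lemma IsFiniteAwayFrom.integrable {ν : Measure E} (hν : IsFiniteAwayFrom F ν) {g : E → ℝ}
    (hg : AEStronglyMeasurable g ν) {C r : ℝ} (hr : 0 < r) (hgC : ∀ x, |g x| ≤ C)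
    (hvan : ∀ x, infDist x F < r → g x = 0) : Integrable g ν :=
  (Measure.integrableOn_of_bounded (hν r hr) hg (M := C) (ae_of_all _ hgC))
    |>.integrable_of_forall_notMem_eq_zero fun x hx => hvan x (not_le.1 hx)

variable [OpensMeasurableSpace E] {μn : ℕ → Measure E} {μ : Measure E}

namespace TendstoAwayFrom

lemma tendsto_lintegral (H : TendstoAwayFrom F μn μ) (hμn : ∀ n, IsFiniteAwayFrom F (μn n))
    (hμ : IsFiniteAwayFrom F μ) {g : E → ℝ} (hg : Continuous g) (hg0 : 0 ≤ g) {C r : ℝ}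
    (hr : 0 < r) (hgC : ∀ x, g x ≤ C) (hvan : ∀ x, infDist x F < r → g x = 0) :
    Tendsto (fun n => ∫⁻ x, ENNReal.ofReal (g x) ∂μn n) atTop
      (𝓝 (∫⁻ x, ENNReal.ofReal (g x) ∂μ)) := by
  have hgC' : ∀ x, |g x| ≤ C := fun x => (abs_of_nonneg (hg0 x)).trans_le (hgC x)
  have hint : ∀ ν, IsFiniteAwayFrom F ν → Integrable g ν := fun ν hν =>
    hν.integrable hg.aestronglyMeasurable hr hgC' hvan
  exact (tendsto_integral_iff_tendsto_lintegral_ofReal hg0 (fun n => hint _ (hμn n))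
    (hint _ hμ)).1 (H g hg ⟨C, hgC'⟩ ⟨r, hr, hvan⟩)

lemma limsup_measure_le (H : TendstoAwayFrom F μn μ) (hμn : ∀ n, IsFiniteAwayFrom F (μn n))
    (hμ : IsFiniteAwayFrom F μ) {C : Set E} (hC : IsClosed C) {r : ℝ} (hr : 0 < r)
    (hCr : ∀ c ∈ C, r ≤ infDist c F) :
    limsup (fun n => μn n C) atTop ≤ μ C := by
  set δ : ℕ → ℝ := fun k => r / 2 / (k + 1)
  have hδ0 : ∀ k, 0 < δ k := fun k => by positivity
  have hδr : ∀ k, δ k ≤ r / 2 := fun k =>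
    div_le_self (by positivity) (by linarith [k.cast_nonneg (α := ℝ)])
  have hδlim : Tendsto δ atTop (𝓝 0) := tendsto_const_div_atTop_nhds_zero_nat (r / 2) |>.comp
    (tendsto_add_atTop_nat 1) |>.congr fun k => by simp [δ]
  set g : ℕ → E →ᵇ ℝ≥0 := fun k => thickenedIndicator (hδ0 k) C
  have hsupp : ∀ k x, g k x ≠ 0 → r / 2 ≤ infDist x F := fun k x hx => by
    have hx' : x ∈ thickening (δ k) C := by_contra fun h => hx (thickenedIndicator_zero _ _ h)
    linarith [le_infDist_sub_of_mem_thickening hCr hx', hδr k]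
  set D := {x | r / 2 ≤ infDist x F}
  have : IsFiniteMeasure (μ.restrict D) := isFiniteMeasure_restrict.2 (hμ _ (half_pos hr))
  have hrestrict : ∀ k, ∫⁻ x in D, (g k x : ℝ≥0∞) ∂μ = ∫⁻ x, (g k x : ℝ≥0∞) ∂μ := fun k =>
    setLIntegral_eq_of_support_subset fun x hx => hsupp k x (by simpa using hx)
  refine limsup_measure_le_of_tendsto_lintegral hC.measurableSet
    (g := fun k x => (g k x : ℝ≥0∞)) (fun k x => ?_) (fun k => ?_) ?_
  · by_cases hx : x ∈ C
    · simp [hx, g, thickenedIndicator_one (hδ0 k) C hx]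
    · simp [hx]
  · have := H.tendsto_lintegral hμn hμ (g := fun x => (g k x : ℝ)) (by fun_prop)
      (fun x => (g k x).coe_nonneg) (half_pos hr) (fun x => thickenedIndicator_le_one _ _ x)
      fun x hx => by_contra fun h => (hsupp k x (by exact_mod_cast h)).not_gt hx
    simpa only [ENNReal.ofReal_coe_nnreal] using this
  · have := tendsto_lintegral_thickenedIndicator_of_isClosed (μ.restrict D) hC hδ0 hδlim
    rw [Measure.restrict_apply hC.measurableSet,
      inter_eq_left.2 (show C ⊆ D from fun c hc => (half_le_self hr.le).trans (hCr c hc))] at this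
    simpa only [g, hrestrict] using this

lemma le_liminf_measure (H : TendstoAwayFrom F μn μ) (hμn : ∀ n, IsFiniteAwayFrom F (μn n))
    (hμ : IsFiniteAwayFrom F μ) {U : Set E} (hU : IsOpen U) {r : ℝ} (hr : 0 < r)
    (hUr : ∀ a ∈ U, r ≤ infDist a F) :
    μ U ≤ liminf (fun n => μn n U) atTop := by
  rcases U.eq_empty_or_nonempty with rfl | hne
  · simp
  have hUc : Uᶜ.Nonempty := nonempty_compl_of_le_infDist hr hUr hne
  set g : ℕ → E → ℝ := fun k x => min 1 (k * infDist x Uᶜ)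
  have hg0 : ∀ k, 0 ≤ g k := fun k x =>
    le_min zero_le_one (mul_nonneg k.cast_nonneg infDist_nonneg)
  have hg_compl : ∀ k, ∀ x ∉ U, g k x = 0 := fun k x hx => by
    simp [g, infDist_zero_of_mem (s := Uᶜ) hx]
  refine le_liminf_measure_of_tendsto_lintegral hU.measurableSet
    (g := fun k x => ENNReal.ofReal (g k x)) (fun k x => ?_) (fun k => ?_) ?_
  · by_cases hx : x ∈ U
    · rw [indicator_of_mem hx, Pi.one_apply]
      exact ENNReal.ofReal_le_one.2 (min_le_left _ _)
    · simp [hx, hg_compl k x hx]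
  · exact H.tendsto_lintegral hμn hμ (by fun_prop) (hg0 k) hr (fun x => min_le_left _ _)
      fun x hx => hg_compl k x fun hxU => (hUr x hxU).not_gt hx
  · rw [← lintegral_indicator_one hU.measurableSet]
    refine lintegral_tendsto_of_tendsto_of_monotone (fun k => by fun_prop)
      (ae_of_all _ fun x k l hkl => ?_)
      (ae_of_all _ (tendsto_ofReal_min_one_mul_infDist_compl hU hUc))
    exact ENNReal.ofReal_le_ofReal (min_le_min_left _
      (mul_le_mul_of_nonneg_right (Nat.cast_le.2 hkl) infDist_nonneg))

end TendstoAwayFrom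

lemma lintegral_le_liminf_lintegral_of_forall_isOpen
    (hopen : ∀ U : Set E, IsOpen U → (∃ r > (0 : ℝ), ∀ a ∈ U, r ≤ infDist a F) →
      μ U ≤ liminf (fun n => μn n U) atTop) {f : E → ℝ} (hf : Continuous f)
    (hf0 : 0 ≤ f) {r : ℝ} (hr : 0 < r) (hvan : ∀ x, infDist x F < r → f x = 0) :
    ∫⁻ x, ENNReal.ofReal (f x) ∂μ ≤ liminf (fun n => ∫⁻ x, ENNReal.ofReal (f x) ∂μn n) atTop := by
  set D := {x | r / 2 < infDist x F}
  have hD : IsOpen D := isOpen_lt continuous_const (continuous_infDist_pt F)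
  have hrestrict : ∀ ν : Measure E,
      ∫⁻ x in D, ENNReal.ofReal (f x) ∂ν = ∫⁻ x, ENNReal.ofReal (f x) ∂ν := fun ν =>
    setLIntegral_eq_of_support_subset fun x hx => by
      by_contra h
      have hxr : infDist x F < r := (not_lt.1 h : infDist x F ≤ r / 2).trans_lt (half_lt_self hr)
      exact hx (by simp only [hvan x hxr, ENNReal.ofReal_zero])
  have := lintegral_le_liminf_lintegral_of_forall_isOpen_measure_le_liminf_measure
    (μ := μ.restrict D) (μs := fun n => (μn n).restrict D) hf hf0 fun G hG => by
      simp only [Measure.restrict_apply hG.measurableSet]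
      exact hopen _ (hG.inter hD) ⟨r / 2, half_pos hr, fun a ha => ha.2.le⟩
  simpa only [hrestrict] using this

lemma limsup_lintegral_le_of_forall_isClosed
    (hclosed : ∀ C : Set E, IsClosed C → (∃ r > (0 : ℝ), ∀ a ∈ C, r ≤ infDist a F) →
      limsup (fun n => μn n C) atTop ≤ μ C)
    (hμ : IsFiniteAwayFrom F μ) {f : E → ℝ}
    (hf : Continuous f) (hf0 : 0 ≤ f) {C r : ℝ} (hr : 0 < r) (hfC : ∀ x, f x ≤ C)
    (hvan : ∀ x, infDist x F < r → f x = 0) :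
    limsup (fun n => ∫⁻ x, ENNReal.ofReal (f x) ∂μn n) atTop ≤
      ∫⁻ x, ENNReal.ofReal (f x) ∂μ := by
  set D := {x | r ≤ infDist x F}
  have hsupp : ∀ x, f x ≠ 0 → x ∈ D := fun x hx => not_lt.1 fun h => hx (hvan x h)
  have hD : limsup (fun n => μn n D) atTop ≤ μ D :=
    hclosed D (isClosed_le continuous_const (continuous_infDist_pt F)) ⟨r, hr, fun _ h => h⟩
  refine limsup_lintegral_le_of_forall_limsup_measure_le hf.measurable hf0 hfC
    (ENNReal.add_ne_top.2 ⟨hμ r hr, ENNReal.one_ne_top⟩) ?_ fun t ht => ?_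
  · filter_upwards [eventually_lt_of_limsup_lt
      (hD.trans_lt (ENNReal.lt_add_right (hμ r hr) one_ne_zero))] with n hn
    exact (measure_mono fun x (hx : 0 < f x) => hsupp x hx.ne').trans hn.le
  · exact hclosed _ (isClosed_le continuous_const hf)
      ⟨r, hr, fun x (hx : t ≤ f x) => hsupp x (ht.trans_le hx).ne'⟩

lemma tendsto_integral_of_forall_isOpen_of_forall_isClosed
    (hopen : ∀ U : Set E, IsOpen U → (∃ r > (0 : ℝ), ∀ a ∈ U, r ≤ infDist a F) →
      μ U ≤ liminf (fun n => μn n U) atTop)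
    (hclosed : ∀ C : Set E, IsClosed C → (∃ r > (0 : ℝ), ∀ a ∈ C, r ≤ infDist a F) →
      limsup (fun n => μn n C) atTop ≤ μ C)
    (hμn : ∀ n, IsFiniteAwayFrom F (μn n)) (hμ : IsFiniteAwayFrom F μ) {f : E → ℝ}
    (hf : Continuous f) (hf0 : 0 ≤ f) {C r : ℝ} (hr : 0 < r) (hfC : ∀ x, f x ≤ C)
    (hvan : ∀ x, infDist x F < r → f x = 0) :
    Tendsto (fun n => ∫ x, f x ∂μn n) atTop (𝓝 (∫ x, f x ∂μ)) := by
  have hint : ∀ ν, IsFiniteAwayFrom F ν → Integrable f ν := fun ν hν =>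
    hν.integrable hf.aestronglyMeasurable hr
      (fun x => (abs_of_nonneg (hf0 x)).trans_le (hfC x)) hvan
  refine (tendsto_integral_iff_tendsto_lintegral_ofReal hf0 (fun n => hint _ (hμn n))
    (hint _ hμ)).2 (tendsto_of_le_liminf_of_limsup_le ?_ ?_)
  · exact lintegral_le_liminf_lintegral_of_forall_isOpen hopen hf hf0 hr hvan
  · exact limsup_lintegral_le_of_forall_isClosed hclosed hμ hf hf0 hr hfC hvan

lemma tendstoAwayFrom_of_forall_isOpen_of_forall_isClosed
    (hopen : ∀ U : Set E, IsOpen U → (∃ r > (0 : ℝ), ∀ a ∈ U, r ≤ infDist a F) →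
      μ U ≤ liminf (fun n => μn n U) atTop)
    (hclosed : ∀ C : Set E, IsClosed C → (∃ r > (0 : ℝ), ∀ a ∈ C, r ≤ infDist a F) →
      limsup (fun n => μn n C) atTop ≤ μ C)
    (hμn : ∀ n, IsFiniteAwayFrom F (μn n)) (hμ : IsFiniteAwayFrom F μ) :
    TendstoAwayFrom F μn μ := by
  rintro f hf ⟨C, hC⟩ ⟨r, hr, hvan⟩
  have hsplit : ∀ ν, IsFiniteAwayFrom F ν →
      ∫ x, f x ∂ν = ∫ x, max (f x) 0 ∂ν - ∫ x, max (-f x) 0 ∂ν := fun ν hν => by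
    have hint := hν.integrable hf.aestronglyMeasurable hr hC hvan
    rw [← integral_sub hint.pos_part hint.neg_part]
    simp only [max_zero_sub_max_neg_zero_eq_self]
  have hpos := tendsto_integral_of_forall_isOpen_of_forall_isClosed hopen hclosed hμn hμ
    (f := fun x => max (f x) 0) (by fun_prop) (fun x => le_max_right _ _) hr
    (fun x => max_le ((le_abs_self _).trans (hC x)) ((abs_nonneg _).trans (hC x)))
    fun x hx => by simp [hvan x hx]
  have hneg := tendsto_integral_of_forall_isOpen_of_forall_isClosed hopen hclosed hμn hμ
    (f := fun x => max (-f x) 0) (by fun_prop) (fun x => le_max_right _ _) hr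
    (fun x => max_le ((neg_le_abs _).trans (hC x)) ((abs_nonneg _).trans (hC x)))
    fun x hx => by simp [hvan x hx]
  simpa only [hsplit _ (hμn _), hsplit _ hμ] using hpos.sub hneg

end AwayFrom

theorem stmt_2_general
    {E : Type*} [MetricSpace E]
    [MeasurableSpace E] [BorelSpace E]
    (F : Set E)
    (μn : ℕ → Measure E) (μ : Measure E)
    (hμnFin : ∀ n, ∀ r > (0 : ℝ), μn n {x | r ≤ infDist x F} ≠ ⊤)
    (hμFin : ∀ r > (0 : ℝ), μ {x | r ≤ infDist x F} ≠ ⊤) :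
    (∀ f : E → ℝ, Continuous f → (∃ C, ∀ x, |f x| ≤ C) →
        (∃ r > (0 : ℝ), ∀ x, infDist x F < r → f x = 0) →
        Tendsto (fun n : ℕ => ∫ x, f x ∂(μn n)) atTop (𝓝 (∫ x, f x ∂μ)))
      ↔ (∀ A : Set E, MeasurableSet A → (∃ r > (0 : ℝ), ∀ a ∈ A, r ≤ infDist a F) →
          μ (interior A) ≤ liminf (fun n : ℕ => μn n A) atTop ∧
            limsup (fun n : ℕ => μn n A) atTop ≤ μ (closure A)) := by
  constructor
  · rintro H A - ⟨r, hr, hA⟩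
    constructor
    · calc μ (interior A) ≤ liminf (fun n => μn n (interior A)) atTop :=
            TendstoAwayFrom.le_liminf_measure H hμnFin hμFin isOpen_interior hr
              fun a ha => hA a (interior_subset ha)
        _ ≤ liminf (fun n => μn n A) atTop :=
            liminf_le_liminf (Eventually.of_forall fun n => measure_mono interior_subset)
    · calc limsup (fun n => μn n A) atTop ≤ limsup (fun n => μn n (closure A)) atTop :=
            limsup_le_limsup (Eventually.of_forall fun n => measure_mono subset_closure)
        _ ≤ μ (closure A) :=
            TendstoAwayFrom.limsup_measure_le H hμnFin hμFin isClosed_closure hr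
              (closure_minimal hA (isClosed_le continuous_const (continuous_infDist_pt F)))
  · intro H
    refine tendstoAwayFrom_of_forall_isOpen_of_forall_isClosed (fun U hU hUr => ?_)
      (fun C hC hCr => ?_) hμnFin hμFin
    · simpa only [hU.interior_eq] using (H U hU.measurableSet hUr).1
    · simpa only [hC.closure_eq] using (H C hC.measurableSet hCr).2

/-- Portmanteau-type characterization of M-convergence on `E∖F`
(Proposition 2.1 (i) ⇔ (ii) of the paper). -/
theorem stmt_2
    {E : Type*} [MetricSpace E] [CompleteSpace E] [TopologicalSpace.SeparableSpace E]
    [MeasurableSpace E] [BorelSpace E]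
    (F : Set E) (hF : IsClosed F)
    (μn : ℕ → Measure E) (μ : Measure E)
    (hμnFin : ∀ n, ∀ r > (0 : ℝ), μn n {x | r ≤ infDist x F} ≠ ⊤)
    (hμFin : ∀ r > (0 : ℝ), μ {x | r ≤ infDist x F} ≠ ⊤) :
    (∀ f : E → ℝ, Continuous f → (∃ C, ∀ x, |f x| ≤ C) →
        (∃ r > (0 : ℝ), ∀ x, infDist x F < r → f x = 0) →
        Tendsto (fun n : ℕ => ∫ x, f x ∂(μn n)) atTop (𝓝 (∫ x, f x ∂μ)))
      ↔ (∀ A : Set E, MeasurableSet A → (∃ r > (0 : ℝ), ∀ a ∈ A, r ≤ infDist a F) →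
          μ (interior A) ≤ liminf (fun n : ℕ => μn n A) atTop ∧
            limsup (fun n : ℕ => μn n A) atTop ≤ μ (closure A)) :=
  stmt_2_general F μn μ hμnFin hμFin
end

section
/- Let ν be a Borel probability measure on 𝒳 with ν({0}) = 0 that is regularly varying with scaling sequence (a_n) and limit measure μ. Let f : 𝒯×𝒳 → [0,∞) be bounded and continuous with f(t,x) = 0 whenever d(0,x) < r_0, for some r_0 > 0. Then: (a) for every t ∈ 𝒯, (L_n f)(t) := n·∫_𝒳 (1 − e^{−f(t, a_n⁻¹•x)}) ν(dx) converges as n → ∞ to (Lf)(t) := ∫_𝒳 (1 − e^{−f(t,x)}) μ(dx); and (b) sup_{n ≥ 1} sup_{t ∈ 𝒯} (L_n f)(t) < ∞. -/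
open MeasureTheory Filter Metric Topology Set

/-!
Part (a) is the definition of regular variation applied to `x ↦ 1 - exp (-f (t, x))`, which is
continuous, takes values in `[0, 1]` and vanishes near `0`. For part (b), all these functions lie
below one continuous Urysohn cutoff `g` that vanishes on `B(0, r₀/2)` and equals `1` off `B(0, r₀)`.
Regular variation makes `n ∫ g(a_n⁻¹ • x) ν(dx)` convergent, hence bounded, and this bound
dominates `(L_n f)(t)` for every `n` and `t`.
-/

lemma one_sub_exp_neg_mem_Icc {y : ℝ} (hy : 0 ≤ y) : 1 - Real.exp (-y) ∈ Icc (0 : ℝ) 1 :=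
  ⟨sub_nonneg.2 (Real.exp_le_one_iff.2 (neg_nonpos.2 hy)), by linarith [Real.exp_pos (-y)]⟩

lemma abs_le_one_of_mem_Icc {y : ℝ} (hy : y ∈ Icc (0 : ℝ) 1) : |y| ≤ 1 :=
  abs_le.2 ⟨by linarith [hy.1], hy.2⟩

lemma exists_continuous_cutoff {X : Type*} [MetricSpace X] (x₀ : X) {r : ℝ} (hr : 0 < r) :
    ∃ g : X → ℝ, Continuous g ∧ (∀ x, g x ∈ Icc (0 : ℝ) 1) ∧
      (∀ x, dist x₀ x < r / 2 → g x = 0) ∧ (∀ x, r ≤ dist x₀ x → g x = 1) := by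
  have hdisj : Disjoint (closedBall x₀ (r / 2)) {x | r ≤ dist x₀ x} :=
    disjoint_left.2 fun x hx hx' => by
      rw [mem_closedBall, dist_comm] at hx
      exact absurd (show r ≤ dist x₀ x from hx') (not_le.2 (by linarith))
  obtain ⟨g, hg0, hg1, hg01⟩ := exists_continuous_zero_one_of_isClosed isClosed_closedBall
    (isClosed_le continuous_const (continuous_const.dist continuous_id)) hdisj
  refine ⟨g, g.continuous, hg01, fun x hx => hg0 ?_, fun x hx => hg1 hx⟩
  rw [mem_closedBall, dist_comm]
  exact hx.le

theorem exists_forall_mul_integral_comp_le_of_tendsto {X : Type*} [MeasurableSpace X]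
    {ν : Measure X} {φ : ℕ → X → X} {g : X → ℝ} (hint : ∀ n, Integrable (g ∘ φ n) ν) {L : ℝ}
    (hlim : Tendsto (fun n : ℕ => (n : ℝ) * ∫ x, g (φ n x) ∂ν) atTop (𝓝 L)) :
    ∃ C, ∀ (n : ℕ) (h : X → ℝ), (∀ x, 0 ≤ h x) → (∀ x, h x ≤ g x) →
      (n : ℝ) * ∫ x, h (φ n x) ∂ν ≤ C := by
  obtain ⟨C, hC⟩ := hlim.bddAbove_range
  refine ⟨C, fun n h h0 hle => le_trans ?_ (hC (mem_range_self n))⟩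
  exact mul_le_mul_of_nonneg_left
    (integral_mono_of_nonneg (ae_of_all _ fun _ => h0 _) (hint n) (ae_of_all _ fun _ => hle _))
    n.cast_nonneg

theorem stmt_5_general
    {T : Type*} [MetricSpace T]
    {X : Type*} [MetricSpace X]
    [MeasurableSpace X] [BorelSpace X]
    (x0 : X) (σ : ℝ → X → X)
    (hσc : ContinuousOn (fun p : ℝ × X => σ p.1 p.2) (Set.Ioi (0 : ℝ) ×ˢ Set.univ))
    (ν : Measure X) [IsProbabilityMeasure ν]
    (a : ℕ → ℝ) (ha : ∀ n, 0 < a n)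
    (μ : Measure X)
    (hRV : ∀ h : X → ℝ, Continuous h → (∃ C, ∀ x, |h x| ≤ C) →
      (∃ ρ > (0 : ℝ), ∀ x, dist x0 x < ρ → h x = 0) →
      Tendsto (fun n : ℕ => (n : ℝ) * ∫ x, h (σ (a n)⁻¹ x) ∂ν) atTop (𝓝 (∫ x, h x ∂μ)))
    (f : T × X → ℝ) (hfc : Continuous f) (hf0 : ∀ z, 0 ≤ f z)
    (r0 : ℝ) (hr0 : 0 < r0) (hfvan : ∀ t x, dist x0 x < r0 → f (t, x) = 0) :
    (∀ t : T,
      Tendsto (fun n : ℕ => (n : ℝ) * ∫ x, (1 - Real.exp (-f (t, σ (a n)⁻¹ x))) ∂ν)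
        atTop (𝓝 (∫ x, (1 - Real.exp (-f (t, x))) ∂μ)))
    ∧ ∃ C : ℝ, ∀ n : ℕ, ∀ t : T,
        (n : ℝ) * ∫ x, (1 - Real.exp (-f (t, σ (a n)⁻¹ x))) ∂ν ≤ C := by
  have hmem : ∀ t x, 1 - Real.exp (-f (t, x)) ∈ Icc (0 : ℝ) 1 :=
    fun t x => one_sub_exp_neg_mem_Icc (hf0 _)
  refine ⟨fun t => hRV _ (by fun_prop) ⟨1, fun x => abs_le_one_of_mem_Icc (hmem t x)⟩
    ⟨r0, hr0, fun x hx => by simp [hfvan t x hx]⟩, ?_⟩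
  obtain ⟨g, hgc, hg01, hg0, hg1⟩ := exists_continuous_cutoff x0 hr0
  have hσn : ∀ n, Continuous (σ (a n)⁻¹) := fun n =>
    hσc.comp_continuous (continuous_const.prodMk continuous_id) fun _ => ⟨inv_pos.2 (ha n), trivial⟩
  have hint : ∀ n, Integrable (g ∘ σ (a n)⁻¹) ν := fun n =>
    .of_bound (hgc.comp (hσn n)).aestronglyMeasurable 1
      (ae_of_all _ fun x => abs_le_one_of_mem_Icc (hg01 _))
  obtain ⟨C, hC⟩ := exists_forall_mul_integral_comp_le_of_tendsto hint
    (hRV g hgc ⟨1, fun x => abs_le_one_of_mem_Icc (hg01 x)⟩ ⟨r0 / 2, half_pos hr0, hg0⟩)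
  refine ⟨C, fun n t => hC n _ (fun x => (hmem t x).1) fun x => ?_⟩
  by_cases hx : dist x0 x < r0
  · simpa [hfvan t x hx] using (hg01 x).1
  · rw [hg1 x (not_lt.1 hx)]
    exact (hmem t x).2

/-- Pointwise convergence and uniform boundedness of `L_n f` (Lemma 5.3 of the paper). -/
theorem stmt_5
    {T : Type*} [MetricSpace T] [CompleteSpace T] [TopologicalSpace.SeparableSpace T]
    {X : Type*} [MetricSpace X] [CompleteSpace X] [TopologicalSpace.SeparableSpace X]
    [MeasurableSpace X] [BorelSpace X]
    (x0 : X) (σ : ℝ → X → X)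
    (hσc : ContinuousOn (fun p : ℝ × X => σ p.1 p.2) (Set.Ioi (0 : ℝ) ×ˢ Set.univ))
    (hσ1 : ∀ x, σ 1 x = x)
    (hσm : ∀ u v : ℝ, 0 < u → 0 < v → ∀ x, σ u (σ v x) = σ (u * v) x)
    (hσ0 : ∀ u : ℝ, 0 < u → σ u x0 = x0)
    (ν : Measure X) [IsProbabilityMeasure ν] (hν0 : ν {x0} = 0)
    (a : ℕ → ℝ) (ha : ∀ n, 0 < a n) (haTop : Tendsto a atTop atTop)
    (μ : Measure X) (hμ0 : μ ≠ 0)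
    (hμFin : ∀ r > (0 : ℝ), μ {x | r ≤ dist x0 x} ≠ ⊤)
    (hRV : ∀ h : X → ℝ, Continuous h → (∃ C, ∀ x, |h x| ≤ C) →
      (∃ ρ > (0 : ℝ), ∀ x, dist x0 x < ρ → h x = 0) →
      Tendsto (fun n : ℕ => (n : ℝ) * ∫ x, h (σ (a n)⁻¹ x) ∂ν) atTop (𝓝 (∫ x, h x ∂μ)))
    (f : T × X → ℝ) (hfc : Continuous f) (hf0 : ∀ z, 0 ≤ f z) (hfb : ∃ C, ∀ z, f z ≤ C)
    (r0 : ℝ) (hr0 : 0 < r0) (hfvan : ∀ t x, dist x0 x < r0 → f (t, x) = 0) :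
    (∀ t : T,
      Tendsto (fun n : ℕ => (n : ℝ) * ∫ x, (1 - Real.exp (-f (t, σ (a n)⁻¹ x))) ∂ν)
        atTop (𝓝 (∫ x, (1 - Real.exp (-f (t, x))) ∂μ)))
    ∧ ∃ C : ℝ, ∀ n : ℕ, ∀ t : T,
        (n : ℝ) * ∫ x, (1 - Real.exp (-f (t, σ (a n)⁻¹ x))) ∂ν ≤ C :=
  stmt_5_general x0 σ hσc ν a ha μ hRV f hfc hf0 r0 hr0 hfvan
end

section
/- Let 𝒯 be a complete separable metric space, (Ω,𝒜,P) a probability space, N : Ω → ℕ a random variable with E[N] < ∞, and T_1, T_2, … : Ω → 𝒯 random elements. Let M ≥ 0 and let g_n (n ≥ 1) and g be Borel functions from 𝒯 to [0,M] with g_n(t) → g(t) as n → ∞ for every t ∈ 𝒯. Then n·(1 − E[exp(−(1/n)·Σ_{i=1}^{N} g_n(T_i))]) → E[Σ_{i=1}^{N} g(T_i)] as n → ∞. In particular, if λ is the intensity measure of the point process Σ_{i=1}^{N} ε_{T_i}, i.e. λ(A) = E[#{1 ≤ i ≤ N : T_i ∈ A}] for Borel A, the limit equals ∫_𝒯 g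 dλ. -/
open MeasureTheory Filter Topology

/-!
Since `y / (1 + y) ≤ 1 - exp (-y) ≤ y` for `y ≥ 0`, the quantity `n (1 - exp (-x / n))` is squeezed
between `x / (1 + x / n)` and `x`. Hence `n (1 - exp (-S_n / n)) → S` pointwise for
`S_n = ∑_{i ≤ N} g_n(T_i)`, with the integrable bound `S_n ≤ M N`, and dominated convergence gives
the limit. Writing `∑_{i ≤ N}` as `∑' i, 1_{i < N}` and exchanging sum and integral identifies the
intensity measure with `∑_i (T_i)_* (P|_{i < N})`, which yields `E ∑_{i ≤ N} g(T_i) = ∫ g dλ`.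
-/

namespace Real

lemma div_one_add_le_one_sub_exp_neg {y : ℝ} (hy : 0 ≤ y) : y / (1 + y) ≤ 1 - exp (-y) := by
  have h : exp (-y) ≤ (1 + y)⁻¹ := by
    rw [exp_neg]
    exact inv_anti₀ (by positivity) (by linarith [add_one_le_exp y])
  have : 1 - (1 + y)⁻¹ = y / (1 + y) := by field_simp; ring
  linarith

lemma one_sub_exp_neg_le (y : ℝ) : 1 - exp (-y) ≤ y := by
  linarith [one_sub_le_exp_neg y]

lemma mul_one_sub_exp_neg_div_le {t : ℝ} (ht : 0 < t) (x : ℝ) :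
    t * (1 - exp (-(1 / t) * x)) ≤ x := by
  calc t * (1 - exp (-(1 / t) * x)) ≤ t * ((1 / t) * x) := by
        gcongr
        rw [neg_mul]
        exact one_sub_exp_neg_le _
    _ = x := by field_simp

lemma div_one_add_div_le_mul_one_sub_exp_neg {t x : ℝ} (ht : 0 < t) (hx : 0 ≤ x) :
    x / (1 + x / t) ≤ t * (1 - exp (-(1 / t) * x)) := by
  calc x / (1 + x / t) = t * ((1 / t * x) / (1 + 1 / t * x)) := by field_simp
    _ ≤ t * (1 - exp (-(1 / t) * x)) := by
        gcongr
        rw [neg_mul]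
        exact div_one_add_le_one_sub_exp_neg (by positivity)

lemma mul_one_sub_exp_neg_div_nonneg {t x : ℝ} (ht : 0 ≤ t) (hx : 0 ≤ x) :
    0 ≤ t * (1 - exp (-(1 / t) * x)) := by
  refine mul_nonneg ht (sub_nonneg.mpr ?_)
  rw [exp_le_one_iff, neg_mul, neg_nonpos]
  positivity

lemma tendsto_mul_one_sub_exp_neg_div {x : ℕ → ℝ} {L : ℝ} (hx0 : ∀ n, 0 ≤ x n)
    (hx : Tendsto x atTop (𝓝 L)) :
    Tendsto (fun n : ℕ => (n : ℝ) * (1 - exp (-(1 / (n : ℝ)) * x n))) atTop (𝓝 L) := by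
  have hlower : Tendsto (fun n : ℕ => x n / (1 + x n / n)) atTop (𝓝 L) := by
    have hdenom : Tendsto (fun n : ℕ => 1 + x n / n) atTop (𝓝 (1 + 0)) :=
      tendsto_const_nhds.add (hx.div_atTop tendsto_natCast_atTop_atTop)
    have h := hx.div hdenom (by norm_num)
    rwa [add_zero, div_one] at h
  refine tendsto_of_tendsto_of_tendsto_of_le_of_le' hlower hx ?_ ?_
  all_goals filter_upwards [eventually_gt_atTop 0] with n hn
  · exact div_one_add_div_le_mul_one_sub_exp_neg (by exact_mod_cast hn) (hx0 n)
  · exact mul_one_sub_exp_neg_div_le (by exact_mod_cast hn) _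

end Real

section Laplace

variable {Ω : Type*} [MeasurableSpace Ω] (P : Measure Ω) [IsProbabilityMeasure P]

lemma mul_one_sub_integral_exp_neg_div {X : Ω → ℝ} (hX : AEStronglyMeasurable X P)
    (hX0 : ∀ ω, 0 ≤ X ω) {t : ℝ} (ht : 0 ≤ t) :
    t * (1 - ∫ ω, Real.exp (-(1 / t) * X ω) ∂P) =
      ∫ ω, t * (1 - Real.exp (-(1 / t) * X ω)) ∂P := by
  have hexp : Integrable (fun ω => Real.exp (-(1 / t) * X ω)) P := by
    refine Integrable.of_bound
      (Real.continuous_exp.comp_aestronglyMeasurable (hX.const_mul _)) 1 (ae_of_all _ ?_)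
    intro ω
    rw [Real.norm_of_nonneg (Real.exp_pos _).le, Real.exp_le_one_iff, neg_mul, neg_nonpos]
    exact mul_nonneg (by positivity) (hX0 ω)
  rw [integral_const_mul, integral_sub (integrable_const 1) hexp]
  simp

theorem tendsto_mul_one_sub_integral_exp_neg_div {X : ℕ → Ω → ℝ} {X' Y : Ω → ℝ}
    (hXmeas : ∀ n, AEStronglyMeasurable (X n) P) (hX0 : ∀ n ω, 0 ≤ X n ω)
    (hXY : ∀ n ω, X n ω ≤ Y ω) (hY : Integrable Y P)
    (hlim : ∀ᵐ ω ∂P, Tendsto (fun n => X n ω) atTop (𝓝 (X' ω))) :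
    Tendsto (fun n : ℕ => (n : ℝ) * (1 - ∫ ω, Real.exp (-(1 / (n : ℝ)) * X n ω) ∂P))
      atTop (𝓝 (∫ ω, X' ω ∂P)) := by
  simp_rw [mul_one_sub_integral_exp_neg_div P (hXmeas _) (hX0 _) (Nat.cast_nonneg _)]
  refine tendsto_integral_filter_of_dominated_convergence Y (Eventually.of_forall fun n => ?_)
    ?_ hY ?_
  · have := hXmeas n
    fun_prop
  · filter_upwards [eventually_gt_atTop 0] with n hn
    refine ae_of_all _ fun ω => ?_
    have hn' : (0 : ℝ) < n := by exact_mod_cast hn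
    rw [Real.norm_of_nonneg (Real.mul_one_sub_exp_neg_div_nonneg hn'.le (hX0 n ω))]
    exact (Real.mul_one_sub_exp_neg_div_le hn' _).trans (hXY n ω)
  · filter_upwards [hlim] with ω hω
    exact Real.tendsto_mul_one_sub_exp_neg_div (hX0 · ω) hω

end Laplace

section PointProcess

variable {Ω T : Type*}

lemma sum_range_eq_tsum_indicator {β : Type*} [AddCommMonoid β] [TopologicalSpace β]
    (N : Ω → ℕ) (f : ℕ → Ω → β) (ω : Ω) :
    ∑ i ∈ Finset.range (N ω), f i ω = ∑' i, {ω' | i < N ω'}.indicator (f i) ω := by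
  rw [tsum_eq_sum (s := Finset.range (N ω))
    fun i hi => Set.indicator_of_notMem (by simpa using hi) _]
  exact Finset.sum_congr rfl fun i hi =>
    (Set.indicator_of_mem (by simpa using Finset.mem_range.mp hi) _).symm

variable [MeasurableSpace Ω] [MeasurableSpace T]

lemma measurable_sum_range_index {β : Type*} [AddCommMonoid β] [MeasurableSpace β]
    [MeasurableAdd₂ β] {N : Ω → ℕ} (hN : Measurable N) {f : ℕ → Ω → β}
    (hf : ∀ i, Measurable (f i)) :
    Measurable fun ω => ∑ i ∈ Finset.range (N ω), f i ω := by
  have h : Measurable fun p : Ω × ℕ => ∑ i ∈ Finset.range p.2, f i p.1 :=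
    measurable_from_prod_countable_left fun m =>
      Finset.measurable_sum (f := fun i ω => f i ω) (Finset.range m) fun i _ => hf i
  exact h.comp (measurable_id.prodMk hN)

lemma lintegral_sum_range_eq_tsum (P : Measure Ω) {N : Ω → ℕ} (hN : Measurable N)
    {f : ℕ → Ω → ENNReal} (hf : ∀ i, Measurable (f i)) :
    ∫⁻ ω, ∑ i ∈ Finset.range (N ω), f i ω ∂P = ∑' i, ∫⁻ ω in {ω | i < N ω}, f i ω ∂P := by
  have hset : ∀ i, MeasurableSet {ω | i < N ω} := fun i => hN measurableSet_Ioi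
  simp_rw [sum_range_eq_tsum_indicator N f]
  rw [lintegral_tsum fun i => ((hf i).indicator (hset i)).aemeasurable]
  exact tsum_congr fun i => lintegral_indicator (hset i) _

/-- The intensity measure `A ↦ E #{i < N : T_i ∈ A}` of the point process `∑_{i < N} δ_{T_i}`. -/
noncomputable def intensity (P : Measure Ω) (N : Ω → ℕ) (X : ℕ → Ω → T) : Measure T :=
  Measure.sum fun i => (P.restrict {ω | i < N ω}).map (X i)

variable {P : Measure Ω} {N : Ω → ℕ} {X : ℕ → Ω → T}

theorem lintegral_intensity (hN : Measurable N) (hX : ∀ i, Measurable (X i)) {G : T → ENNReal}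
    (hG : Measurable G) :
    ∫⁻ t, G t ∂intensity P N X = ∫⁻ ω, ∑ i ∈ Finset.range (N ω), G (X i ω) ∂P := by
  rw [intensity, lintegral_sum_measure,
    lintegral_sum_range_eq_tsum P hN (f := fun i ω => G (X i ω)) fun i => hG.comp (hX i)]
  exact tsum_congr fun i => lintegral_map hG (hX i)

lemma eq_intensity_of_forall_measurableSet (hN : Measurable N) (hX : ∀ i, Measurable (X i))
    {lam : Measure T}
    (hlam : ∀ A : Set T, MeasurableSet A →
      lam A = ∫⁻ ω, ∑ i ∈ Finset.range (N ω), A.indicator (fun _ => (1 : ENNReal)) (X i ω) ∂P) :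
    lam = intensity P N X := by
  ext A hA
  rw [hlam A hA, ← lintegral_intensity hN hX (measurable_const.indicator hA),
    lintegral_indicator_const hA, one_mul]

theorem integral_sum_range_eq_integral_intensity (hN : Measurable N) (hX : ∀ i, Measurable (X i))
    {g : T → ℝ} (hg : Measurable g) (hg0 : ∀ t, 0 ≤ g t) :
    ∫ ω, ∑ i ∈ Finset.range (N ω), g (X i ω) ∂P = ∫ t, g t ∂intensity P N X := by
  rw [integral_eq_lintegral_of_nonneg_ae
      (ae_of_all _ fun ω => Finset.sum_nonneg fun i _ => hg0 _)
      (measurable_sum_range_index hN fun i => hg.comp (hX i)).aestronglyMeasurable,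
    integral_eq_lintegral_of_nonneg_ae (ae_of_all _ hg0) hg.aestronglyMeasurable,
    lintegral_intensity hN hX (G := fun t => ENNReal.ofReal (g t)) hg.ennreal_ofReal]
  simp_rw [ENNReal.ofReal_sum_of_nonneg fun i _ => hg0 _]

end PointProcess

theorem stmt_6_general
    {T : Type*}
    [MeasurableSpace T]
    {Ω : Type*} [MeasurableSpace Ω] (P : Measure Ω) [IsProbabilityMeasure P]
    (N : Ω → ℕ) (hNmeas : Measurable N) (hNint : Integrable (fun ω => (N ω : ℝ)) P)
    (Tt : ℕ → Ω → T) (hTmeas : ∀ i, Measurable (Tt i))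
    (M : ℝ)
    (g : T → ℝ) (gn : ℕ → T → ℝ)
    (hgmeas : Measurable g) (hgnmeas : ∀ n, Measurable (gn n))
    (hgrange : ∀ t, g t ∈ Set.Icc 0 M) (hgnrange : ∀ n t, gn n t ∈ Set.Icc 0 M)
    (hconv : ∀ t, Tendsto (fun n : ℕ => gn n t) atTop (𝓝 (g t)))
    (lam : Measure T)
    (hlam : ∀ A : Set T, MeasurableSet A →
      lam A = ∫⁻ ω, ∑ i ∈ Finset.range (N ω),
        Set.indicator A (fun _ => (1 : ENNReal)) (Tt i ω) ∂P) :
    Tendsto (fun n : ℕ => (n : ℝ) *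
        (1 - ∫ ω, Real.exp (-(1 / (n : ℝ)) * ∑ i ∈ Finset.range (N ω), gn n (Tt i ω)) ∂P))
      atTop (𝓝 (∫ ω, ∑ i ∈ Finset.range (N ω), g (Tt i ω) ∂P))
    ∧ (∫ ω, ∑ i ∈ Finset.range (N ω), g (Tt i ω) ∂P) = ∫ t, g t ∂lam := by
  have hsum_meas (n : ℕ) : Measurable fun ω => ∑ i ∈ Finset.range (N ω), gn n (Tt i ω) :=
    measurable_sum_range_index hNmeas fun i => (hgnmeas n).comp (hTmeas i)
  have hsum_nonneg (n : ℕ) (ω : Ω) : 0 ≤ ∑ i ∈ Finset.range (N ω), gn n (Tt i ω) :=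
    Finset.sum_nonneg fun i _ => (hgnrange n _).1
  have hsum_le (n : ℕ) (ω : Ω) : ∑ i ∈ Finset.range (N ω), gn n (Tt i ω) ≤ M * N ω := by
    have := Finset.sum_le_card_nsmul (Finset.range (N ω)) (fun i => gn n (Tt i ω)) M
      fun i _ => (hgnrange n (Tt i ω)).2
    simpa [mul_comm] using this
  refine ⟨tendsto_mul_one_sub_integral_exp_neg_div P (fun n => (hsum_meas n).aestronglyMeasurable)
    hsum_nonneg hsum_le (hNint.const_mul M)
    (ae_of_all _ fun ω => tendsto_finsetSum _ fun i _ => hconv _), ?_⟩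
  rw [eq_intensity_of_forall_measurableSet hNmeas hTmeas hlam]
  exact integral_sum_range_eq_integral_intensity hNmeas hTmeas hgmeas fun t => (hgrange t).1

/-- Derivative-type limit for the Laplace functional of a finite point process
(Lemma 5.4 of the paper): `n(1 − L_Ψ(g_n/n)) → ∫ g dλ = E[Σ_{i=1}^N g(T_i)]`. -/
theorem stmt_6
    {T : Type*} [MetricSpace T] [CompleteSpace T] [TopologicalSpace.SeparableSpace T]
    [MeasurableSpace T] [BorelSpace T]
    {Ω : Type*} [MeasurableSpace Ω] (P : Measure Ω) [IsProbabilityMeasure P]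
    (N : Ω → ℕ) (hNmeas : Measurable N) (hNint : Integrable (fun ω => (N ω : ℝ)) P)
    (Tt : ℕ → Ω → T) (hTmeas : ∀ i, Measurable (Tt i))
    (M : ℝ) (hM : 0 ≤ M)
    (g : T → ℝ) (gn : ℕ → T → ℝ)
    (hgmeas : Measurable g) (hgnmeas : ∀ n, Measurable (gn n))
    (hgrange : ∀ t, g t ∈ Set.Icc 0 M) (hgnrange : ∀ n t, gn n t ∈ Set.Icc 0 M)
    (hconv : ∀ t, Tendsto (fun n : ℕ => gn n t) atTop (𝓝 (g t)))
    (lam : Measure T)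
    (hlam : ∀ A : Set T, MeasurableSet A →
      lam A = ∫⁻ ω, ∑ i ∈ Finset.range (N ω),
        Set.indicator A (fun _ => (1 : ENNReal)) (Tt i ω) ∂P) :
    Tendsto (fun n : ℕ => (n : ℝ) *
        (1 - ∫ ω, Real.exp (-(1 / (n : ℝ)) * ∑ i ∈ Finset.range (N ω), gn n (Tt i ω)) ∂P))
      atTop (𝓝 (∫ ω, ∑ i ∈ Finset.range (N ω), g (Tt i ω) ∂P))
    ∧ (∫ ω, ∑ i ∈ Finset.range (N ω), g (Tt i ω) ∂P) = ∫ t, g t ∂lam :=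
  stmt_6_general P N hNmeas hNint Tt hTmeas M g gn hgmeas hgnmeas hgrange hgnrange hconv lam hlam
end

section
/- Suppose in addition that 𝒯 is locally compact, let ν be a Borel probability measure on 𝒳 with ν({0}) = 0 that is regularly varying with scaling sequence (a_n) and limit measure μ, and let f : 𝒯×𝒳 → [0,∞) be bounded and Lipschitz continuous (with respect to the sum metric on 𝒯×𝒳) with f(t,x) = 0 whenever d(0,x) < r_0, for some r_0 > 0. Then the function (Lf)(t) := ∫_𝒳 (1 − e^{−f(t,x)}) μ(dx) is continuous on 𝒯 and (L_n f)(t) := n·∫_𝒳 (1 − e^{−f(t, a_n⁻¹•x)}) ν(dx) converges to (Lf)(t) uniformly on 𝒯 as n → ∞. -/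
/-!
Write `g t = 1 - exp (-f (t, ·))`: these functions take values in `[0, 1]`, vanish on
`B(x0, r0)` and are `K`-Lipschitz in `(t, x)`. Continuity of `Lf` holds because
`|g t - g s| ≤ K d(t, s) φ` for a continuous bump `φ` equal to `1` off `B(x0, r0)`.

Both `L_n` and `L` are positive functionals on test functions, so uniform convergence follows once,
for every `ε`, there are a single test function `b` with `∫ b dμ < ε` and finitely many parameters
`F` such that every `g t` is within `b` of some `g s` with `s ∈ F`: convergence at `b` and at the
finitely many `g s` then controls every `t` at once. By separability, finitely many `η`-balls
around centres `C` carry all but `ε` of the `μ`-mass of `{d(x0, ·) ≥ r0 / 2}`. Near `C` each `g t`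
is determined up to `O(Kη)` by the point `(g t c)_{c ∈ C}` of a bounded subset of `ℝ^C`, which has
a finite net; far from `C` the error `|g t - g s| ≤ 1` is absorbed by a cutoff of small integral.
-/

open MeasureTheory Filter Metric Topology

lemma abs_exp_neg_sub_exp_neg_le {p q : ℝ} (hp : 0 ≤ p) (hq : 0 ≤ q) :
    |Real.exp (-p) - Real.exp (-q)| ≤ |p - q| := by
  wlog hqp : q ≤ p generalizing p q
  · rw [abs_sub_comm, abs_sub_comm p]
    exact this hq hp (le_of_not_ge hqp)
  have hsplit : Real.exp (-q) - Real.exp (-p) = Real.exp (-q) * (1 - Real.exp (-(p - q))) := by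
    rw [mul_sub, ← Real.exp_add]; ring_nf
  have h1 : 1 - Real.exp (-(p - q)) ≤ p - q := by linarith [Real.add_one_le_exp (-(p - q))]
  have h2 : 0 ≤ 1 - Real.exp (-(p - q)) := by simp [Real.exp_le_one_iff, hqp]
  have h3 : Real.exp (-q) ≤ 1 := Real.exp_le_one_iff.mpr (by linarith)
  rw [abs_sub_comm, abs_of_nonneg (by rw [hsplit]; positivity), abs_of_nonneg (by linarith),
    hsplit]
  nlinarith [Real.exp_pos (-q)]

lemma LipschitzWith.one_sub_exp_neg {α : Type*} [PseudoMetricSpace α] {K : NNReal} {f : α → ℝ}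
    (hf : LipschitzWith K f) (hf0 : ∀ z, 0 ≤ f z) :
    LipschitzWith K fun z => 1 - Real.exp (-f z) :=
  LipschitzWith.of_dist_le_mul fun z w => by
    rw [Real.dist_eq, sub_sub_sub_cancel_left, abs_sub_comm]
    exact (abs_exp_neg_sub_exp_neg_le (hf0 z) (hf0 w)).trans (hf.dist_le_mul z w)

lemma abs_integral_sub_integral_le_s7 {α : Type*} [MeasurableSpace α] {μ : Measure α}
    {u v b : α → ℝ} (hu : Integrable u μ) (hv : Integrable v μ) (hb : Integrable b μ)
    (h : ∀ x, |u x - v x| ≤ b x) : |∫ x, u x ∂μ - ∫ x, v x ∂μ| ≤ ∫ x, b x ∂μ := by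
  rw [← integral_sub hu hv]
  exact abs_integral_le_integral_abs.trans (integral_mono (hu.sub hv).abs hb h)

lemma integral_le_measureReal_of_le_one {α : Type*} [MeasurableSpace α] {μ : Measure α}
    {ψ : α → ℝ} {E : Set α} (hE : MeasurableSet E) (hEμ : μ E ≠ ⊤) (hψ : Integrable ψ μ)
    (hψ1 : ∀ x, ψ x ≤ 1) (hψE : ∀ x ∉ E, ψ x = 0) : ∫ x, ψ x ∂μ ≤ μ.real E := by
  rw [← integral_indicator_one hE]
  refine integral_mono hψ ((integrable_indicator_iff hE).mpr (integrableOn_const hEμ)) fun x => ?_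
  by_cases hx : x ∈ E
  · simpa [hx] using hψ1 x
  · simp [hx, hψE x hx]

lemma exists_finset_measure_diff_biUnion_ball_lt {X : Type*} [PseudoMetricSpace X]
    [TopologicalSpace.SeparableSpace X] [MeasurableSpace X] [OpensMeasurableSpace X]
    {μ : Measure X} {A : Set X} (hAm : MeasurableSet A) (hA : μ A ≠ ⊤) {η : ℝ} (hη : 0 < η)
    {ε : ENNReal} (hε : 0 < ε) : ∃ C : Finset X, μ (A \ ⋃ c ∈ C, ball c η) < ε := by
  classical
  rcases isEmpty_or_nonempty X with hX | hX
  · exact ⟨∅, by simpa [Set.eq_empty_of_isEmpty A] using hε⟩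
  set c := TopologicalSpace.denseSeq X
  set E : ℕ → Set X := fun N => A \ ⋃ k ∈ Finset.range N, ball (c k) η
  have hE : Antitone E := fun N N' hN =>
    Set.sdiff_subset_sdiff_right (Set.biUnion_subset_biUnion_left (by simpa using hN))
  have hE_empty : ⋂ N, E N = ∅ := by
    refine Set.eq_empty_of_forall_notMem fun x hx => ?_
    obtain ⟨k, hk⟩ := (TopologicalSpace.denseRange_denseSeq X).exists_dist_lt x hη
    exact (Set.mem_iInter.mp hx (k + 1)).2
      (Set.mem_biUnion (Finset.self_mem_range_succ k) (mem_ball.mpr hk))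
  have hEm : ∀ N, MeasurableSet (E N) := fun N =>
    hAm.diff (Finset.measurableSet_biUnion _ fun _ _ => measurableSet_ball)
  have hlim := tendsto_measure_iInter_atTop (μ := μ) (fun N => (hEm N).nullMeasurableSet) hE
    ⟨0, measure_ne_top_of_subset Set.sdiff_subset hA⟩
  rw [hE_empty, measure_empty] at hlim
  obtain ⟨N, hN⟩ := (hlim.eventually (gt_mem_nhds hε)).exists
  exact ⟨(Finset.range N).image c, by simpa [E, Finset.set_biUnion_finset_image] using hN⟩

lemma exists_finset_forall_dist_lt {T ι : Type*} [Fintype ι] {v : T → ι → ℝ}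
    (hv : Bornology.IsBounded (Set.range v)) {δ : ℝ} (hδ : 0 < δ) :
    ∃ F : Finset T, ∀ t, ∃ s ∈ F, dist (v t) (v s) < δ := by
  have hnet : ∃ N ⊆ v '' Set.univ, N.Finite ∧ Set.range v ⊆ ⋃ y ∈ N, ball y δ :=
    Set.image_univ ▸ finite_approx_of_totallyBounded
      (hv.isCompact_closure.totallyBounded.subset subset_closure) δ hδ
  obtain ⟨S, -, hSfin, hcover⟩ := Set.exists_subset_image_finite_and.mp hnet
  refine ⟨hSfin.toFinset, fun t => ?_⟩
  obtain ⟨s, hs, hts⟩ := Set.mem_iUnion₂.mp (Set.biUnion_image ▸ hcover ⟨t, rfl⟩)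
  exact ⟨s, hSfin.mem_toFinset.mpr hs, hts⟩

theorem tendstoUniformly_of_forall_exists_finset_abs_sub_le {ι T α : Type*} {l : Filter ι}
    (S : Set (α → ℝ)) (Λn : ι → (α → ℝ) → ℝ) (Λ : (α → ℝ) → ℝ)
    (hΛn : ∀ n, ∀ u ∈ S, ∀ v ∈ S, ∀ b ∈ S, (∀ x, |u x - v x| ≤ b x) →
      |Λn n u - Λn n v| ≤ Λn n b)
    (hΛ : ∀ u ∈ S, ∀ v ∈ S, ∀ b ∈ S, (∀ x, |u x - v x| ≤ b x) → |Λ u - Λ v| ≤ Λ b)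
    (hconv : ∀ h ∈ S, Tendsto (fun n => Λn n h) l (𝓝 (Λ h)))
    {g : T → α → ℝ} (hg : ∀ t, g t ∈ S)
    (hnet : ∀ ε > 0, ∃ b ∈ S, Λ b < ε ∧ ∃ F : Finset T, ∀ t, ∃ s ∈ F, ∀ x,
      |g t x - g s x| ≤ b x) :
    TendstoUniformly (fun n t => Λn n (g t)) (fun t => Λ (g t)) l := by
  rw [Metric.tendstoUniformly_iff]
  intro ε hε
  obtain ⟨b, hbS, hbε, F, hF⟩ := hnet (ε / 3) (by positivity)
  have hb_ev : ∀ᶠ n in l, Λn n b < ε / 3 := (hconv b hbS).eventually (gt_mem_nhds hbε)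
  have hF_ev : ∀ᶠ n in l, ∀ s ∈ F, dist (Λn n (g s)) (Λ (g s)) < ε / 3 :=
    (eventually_all_finset F).mpr fun s _ =>
      (hconv _ (hg s)).eventually (ball_mem_nhds _ (by positivity))
  filter_upwards [hb_ev, hF_ev] with n hbn hFn t
  obtain ⟨s, hsF, hts⟩ := hF t
  have hΛts : dist (Λ (g t)) (Λ (g s)) < ε / 3 :=
    (hΛ _ (hg t) _ (hg s) b hbS hts).trans_lt hbε
  have hΛnst : dist (Λn n (g s)) (Λn n (g t)) < ε / 3 :=
    (hΛn n _ (hg s) _ (hg t) b hbS fun x => abs_sub_comm (g s x) (g t x) ▸ hts x).trans_lt hbn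
  calc dist (Λ (g t)) (Λn n (g t))
      ≤ dist (Λ (g t)) (Λ (g s)) + dist (Λ (g s)) (Λn n (g s)) + dist (Λn n (g s)) (Λn n (g t)) :=
        dist_triangle4 _ _ _ _
    _ < ε / 3 + ε / 3 + ε / 3 := by
        gcongr
        exact dist_comm (Λ (g s)) _ ▸ hFn s hsF
    _ = ε := by ring

lemma LipschitzWith.abs_sub_le_of_dist_le {T X : Type*} [PseudoMetricSpace T]
    [PseudoMetricSpace X] {G : T × X → ℝ} {K : NNReal} (hG : LipschitzWith K G) {t s : T}
    {x c : X} {δ ρ : ℝ} (hc : |G (t, c) - G (s, c)| ≤ δ) (hxc : dist x c ≤ ρ) :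
    |G (t, x) - G (s, x)| ≤ δ + 2 * K * ρ := by
  have hK : ∀ u, dist (G (u, x)) (G (u, c)) ≤ K * ρ := fun u => by
    have hGu := (hG.comp (LipschitzWith.prodMk_left u)).dist_le_mul x c
    rw [mul_one] at hGu
    exact hGu.trans (mul_le_mul_of_nonneg_left hxc K.coe_nonneg)
  rw [← Real.dist_eq] at hc ⊢
  calc dist (G (t, x)) (G (s, x))
      ≤ dist (G (t, x)) (G (t, c)) + dist (G (t, c)) (G (s, c)) + dist (G (s, c)) (G (s, x)) :=
        dist_triangle4 _ _ _ _
    _ ≤ K * ρ + δ + K * ρ := by gcongr; exacts [hK t, dist_comm (G (s, c)) _ ▸ hK s]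
    _ = δ + 2 * K * ρ := by ring

lemma abs_sub_le_mul_add_of_forall_mem {T X : Type*} [PseudoMetricSpace X] {G : T × X → ℝ}
    {x0 : X} (hG01 : ∀ z, G z ∈ Set.Icc 0 1) {r : ℝ}
    (hvan : ∀ t x, dist x0 x < r → G (t, x) = 0) {φ ψ : X → ℝ} (hφ0 : ∀ x, 0 ≤ φ x)
    (hφ1 : ∀ x, r ≤ dist x0 x → φ x = 1) (hψ0 : ∀ x, 0 ≤ ψ x) {U : Set X}
    (hψ1 : ∀ x, r ≤ dist x0 x → x ∉ U → ψ x = 1) {δ : ℝ} (hδ : 0 ≤ δ) {t s : T}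
    (hU : ∀ x ∈ U, |G (t, x) - G (s, x)| ≤ δ) (x : X) :
    |G (t, x) - G (s, x)| ≤ δ * φ x + ψ x := by
  rcases lt_or_ge (dist x0 x) r with hx | hx
  · rw [hvan t x hx, hvan s x hx, sub_self, abs_zero]
    exact add_nonneg (mul_nonneg hδ (hφ0 x)) (hψ0 x)
  rw [hφ1 x hx, mul_one]
  by_cases hxU : x ∈ U
  · linarith [hU x hxU, hψ0 x]
  · have h1 := hG01 (t, x); have h2 := hG01 (s, x)
    rw [hψ1 x hx hxU, abs_le]
    constructor <;> linarith [h1.1, h1.2, h2.1, h2.2]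

lemma LipschitzWith.exists_finset_forall_abs_sub_le {T X : Type*} [PseudoMetricSpace T]
    [PseudoMetricSpace X] {G : T × X → ℝ} {K : NNReal} (hG : LipschitzWith K G)
    (hG01 : ∀ z, G z ∈ Set.Icc 0 1) (C : Finset X) {δ : ℝ} (hδ : 0 < δ) :
    ∃ F : Finset T, ∀ t, ∃ s ∈ F, ∀ x, ∀ c ∈ C,
      |G (t, x) - G (s, x)| ≤ δ + 2 * K * dist x c := by
  have hbdd : Bornology.IsBounded (Set.range fun t (c : C) => G (t, c)) :=
    (isBounded_Icc (0 : C → ℝ) 1).subset <| by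
      rintro _ ⟨t, rfl⟩
      exact ⟨fun c => (hG01 _).1, fun c => (hG01 _).2⟩
  obtain ⟨F, hF⟩ := exists_finset_forall_dist_lt hbdd hδ
  refine ⟨F, fun t => ?_⟩
  obtain ⟨s, hsF, hts⟩ := hF t
  refine ⟨s, hsF, fun x c hc => hG.abs_sub_le_of_dist_le ?_ le_rfl⟩
  rw [← Real.dist_eq]
  exact (dist_le_pi_dist _ _ ⟨c, hc⟩).trans hts.le

section TestFunctions

variable {X : Type*} [PseudoMetricSpace X]

/-- The test functions `h` in the definition of regular variation. -/
def testFunctions (x0 : X) : Submodule ℝ (X → ℝ) where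
  carrier :=
    {h | Continuous h ∧ (∃ C, ∀ x, |h x| ≤ C) ∧ ∃ ρ > (0 : ℝ), ∀ x, dist x0 x < ρ → h x = 0}
  zero_mem' := ⟨continuous_const, ⟨0, by simp⟩, 1, one_pos, fun _ _ => rfl⟩
  add_mem' := by
    rintro u v ⟨hu, ⟨Cu, hCu⟩, ρu, hρu, hu0⟩ ⟨hv, ⟨Cv, hCv⟩, ρv, hρv, hv0⟩
    refine ⟨hu.add hv, ⟨Cu + Cv, fun x => (abs_add_le _ _).trans (add_le_add (hCu x) (hCv x))⟩,
      min ρu ρv, lt_min hρu hρv, fun x hx => ?_⟩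
    simp [hu0 x (hx.trans_le (min_le_left _ _)), hv0 x (hx.trans_le (min_le_right _ _))]
  smul_mem' := by
    rintro c u ⟨hu, ⟨C, hC⟩, ρ, hρ, hu0⟩
    refine ⟨hu.const_smul c, ⟨|c| * C, fun x => ?_⟩, ρ, hρ, fun x hx => by simp [hu0 x hx]⟩
    rw [Pi.smul_apply, smul_eq_mul, abs_mul]
    exact mul_le_mul_of_nonneg_left (hC x) (abs_nonneg c)

lemma exists_cutoff_mem_testFunctions (x0 : X) {r η : ℝ} (hr : 0 < r) (hη : 0 < η)
    (C : Finset X) :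
    ∃ ψ ∈ testFunctions x0, (∀ x, ψ x ∈ Set.Icc 0 1) ∧
      (∀ x, r ≤ dist x0 x → (∀ c ∈ C, 2 * η ≤ dist x c) → ψ x = 1) ∧
      ∀ x, (dist x0 x < r / 2 ∨ ∃ c ∈ C, dist x c < η) → ψ x = 0 := by
  have hdisj : Disjoint (closedBall x0 (r / 2) ∪ ⋃ c ∈ C, closedBall c η)
      ({x | r ≤ dist x0 x} ∩ ⋂ c ∈ C, {x | 2 * η ≤ dist x c}) := by
    rw [Set.disjoint_left]
    rintro x hx ⟨hxr : r ≤ dist x0 x, hxC⟩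
    rcases hx with hx | hx
    · rw [mem_closedBall, dist_comm] at hx
      linarith
    · obtain ⟨c, hc, hxc⟩ := Set.mem_iUnion₂.mp hx
      have hxc' : 2 * η ≤ dist x c := Set.mem_iInter₂.mp hxC c hc
      linarith [mem_closedBall.mp hxc]
  obtain ⟨ψ, hψ0, hψ1, hψI⟩ := exists_continuous_zero_one_of_isClosed
    (isClosed_closedBall.union (isClosed_biUnion_finset fun c _ => isClosed_closedBall))
    ((isClosed_le continuous_const (continuous_const.dist continuous_id)).inter
      (isClosed_biInter fun c _ => isClosed_le continuous_const
        (continuous_id.dist continuous_const)))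
    hdisj
  have hzero : ∀ x, (dist x0 x < r / 2 ∨ ∃ c ∈ C, dist x c < η) → ψ x = 0 := by
    rintro x (hx | ⟨c, hc, hxc⟩)
    · exact hψ0 (Or.inl (by rw [mem_closedBall, dist_comm]; exact hx.le))
    · exact hψ0 (Or.inr (Set.mem_biUnion hc (mem_closedBall.mpr hxc.le)))
  refine ⟨ψ, ⟨ψ.continuous, ⟨1, fun x => abs_le.mpr ⟨by linarith [(hψI x).1], (hψI x).2⟩⟩,
    r / 2, half_pos hr, fun x hx => hzero x (Or.inl hx)⟩, hψI,
    fun x hx hxC => hψ1 ⟨hx, Set.mem_iInter₂.mpr hxC⟩, hzero⟩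

variable {x0 : X}

lemma integrable_comp_of_mem_testFunctions {Y : Type*} [TopologicalSpace Y] [MeasurableSpace Y]
    [OpensMeasurableSpace Y] {ν : Measure Y} [IsFiniteMeasure ν] {φ : Y → X}
    (hφ : Continuous φ) {h : X → ℝ} (hh : h ∈ testFunctions x0) :
    Integrable (fun y => h (φ y)) ν := by
  obtain ⟨hc, ⟨C, hC⟩, -⟩ := hh
  exact .of_bound (hc.comp hφ).aestronglyMeasurable C (ae_of_all _ fun y => hC (φ y))

lemma abs_mul_integral_comp_sub_le_of_mem_testFunctions {Y : Type*} [TopologicalSpace Y]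
    [MeasurableSpace Y] [OpensMeasurableSpace Y] {ν : Measure Y} [IsFiniteMeasure ν] {φ : Y → X}
    (hφ : Continuous φ) {c : ℝ} (hc : 0 ≤ c) {u v b : X → ℝ} (hu : u ∈ testFunctions x0)
    (hv : v ∈ testFunctions x0) (hb : b ∈ testFunctions x0) (h : ∀ x, |u x - v x| ≤ b x) :
    |c * ∫ y, u (φ y) ∂ν - c * ∫ y, v (φ y) ∂ν| ≤ c * ∫ y, b (φ y) ∂ν := by
  rw [← mul_sub, abs_mul, abs_of_nonneg hc]
  exact mul_le_mul_of_nonneg_left (abs_integral_sub_integral_le_s7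
    (integrable_comp_of_mem_testFunctions hφ hu) (integrable_comp_of_mem_testFunctions hφ hv)
    (integrable_comp_of_mem_testFunctions hφ hb) fun y => h (φ y)) hc

variable [MeasurableSpace X] [BorelSpace X]

lemma integrable_of_mem_testFunctions {μ : Measure X}
    (hμ : ∀ r > (0 : ℝ), μ {x | r ≤ dist x0 x} ≠ ⊤) {h : X → ℝ} (hh : h ∈ testFunctions x0) :
    Integrable h μ := by
  obtain ⟨hc, ⟨C, hC⟩, ρ, hρ, hh0⟩ := hh
  have hA : MeasurableSet {x | ρ ≤ dist x0 x} :=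
    (isClosed_le continuous_const (continuous_const.dist continuous_id)).measurableSet
  refine ((integrable_indicator_iff hA).mpr (integrableOn_const (C := C) (hμ ρ hρ))).mono'
    hc.aestronglyMeasurable (ae_of_all _ fun x => ?_)
  by_cases hx : ρ ≤ dist x0 x
  · simpa [hx] using hC x
  · simp [hx, hh0 x (not_le.mp hx)]


end TestFunctions

section Integrals

variable {T X : Type*} [PseudoMetricSpace T] [PseudoMetricSpace X] [MeasurableSpace X]
  [BorelSpace X] {x0 : X} {μ : Measure X}

lemma exists_cutoff_mem_testFunctions_integral_lt [TopologicalSpace.SeparableSpace X]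
    (hμ : ∀ r > (0 : ℝ), μ {x | r ≤ dist x0 x} ≠ ⊤) {r η ε : ℝ} (hr : 0 < r) (hη : 0 < η)
    (hε : 0 < ε) :
    ∃ C : Finset X, ∃ ψ ∈ testFunctions x0, (∀ x, ψ x ∈ Set.Icc 0 1) ∧
      (∀ x, r ≤ dist x0 x → (∀ c ∈ C, 2 * η ≤ dist x c) → ψ x = 1) ∧ ∫ x, ψ x ∂μ < ε := by
  have hA : MeasurableSet {x | r / 2 ≤ dist x0 x} :=
    (isClosed_le continuous_const (continuous_const.dist continuous_id)).measurableSet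
  obtain ⟨C, hC⟩ := exists_finset_measure_diff_biUnion_ball_lt hA (hμ _ (half_pos hr)) hη
    (ENNReal.ofReal_pos.mpr hε)
  obtain ⟨ψ, hψS, hψI, hψ1, hψ0⟩ := exists_cutoff_mem_testFunctions x0 hr hη C
  refine ⟨C, ψ, hψS, hψI, hψ1, ?_⟩
  refine (integral_le_measureReal_of_le_one
    (hA.diff (C.measurableSet_biUnion fun _ _ => measurableSet_ball))
    (measure_ne_top_of_subset Set.sdiff_subset (hμ _ (half_pos hr)))
    (integrable_of_mem_testFunctions hμ hψS) (fun x => (hψI x).2) fun x hx => hψ0 x ?_).trans_lt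
    (ENNReal.toReal_lt_of_lt_ofReal hC)
  simpa [not_le, or_iff_not_imp_left] using hx

theorem continuous_integral_of_lipschitzWith (hμ : ∀ r > (0 : ℝ), μ {x | r ≤ dist x0 x} ≠ ⊤)
    {G : T × X → ℝ} {K : NNReal} (hG : LipschitzWith K G)
    (hGS : ∀ t, (fun x => G (t, x)) ∈ testFunctions x0) {r : ℝ} (hr : 0 < r)
    (hvan : ∀ t x, dist x0 x < r → G (t, x) = 0) :
    Continuous fun t => ∫ x, G (t, x) ∂μ := by
  obtain ⟨φ, hφS, hφI, hφ1, -⟩ := exists_cutoff_mem_testFunctions x0 hr one_pos ∅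
  refine (LipschitzWith.of_dist_le' (K := K * ∫ x, φ x ∂μ) fun t s => ?_).continuous
  have hbound : ∀ x, |G (t, x) - G (s, x)| ≤ K * dist t s * φ x := by
    intro x
    rcases lt_or_ge (dist x0 x) r with hx | hx
    · rw [hvan t x hx, hvan s x hx, sub_self, abs_zero]
      exact mul_nonneg (by positivity) (hφI x).1
    · rw [hφ1 x hx (by simp), mul_one, ← Real.dist_eq]
      simpa using (hG.comp (LipschitzWith.prodMk_right x)).dist_le_mul t s
  rw [Real.dist_eq, mul_right_comm, ← integral_const_mul]
  exact abs_integral_sub_integral_le_s7 (integrable_of_mem_testFunctions hμ (hGS t))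
    (integrable_of_mem_testFunctions hμ (hGS s))
    ((integrable_of_mem_testFunctions hμ hφS).const_mul _) hbound

theorem exists_mem_testFunctions_integral_lt_forall_abs_sub_le
    [TopologicalSpace.SeparableSpace X] (hμ : ∀ r > (0 : ℝ), μ {x | r ≤ dist x0 x} ≠ ⊤)
    {G : T × X → ℝ} {K : NNReal} (hG : LipschitzWith K G) (hG01 : ∀ z, G z ∈ Set.Icc 0 1)
    {r : ℝ} (hr : 0 < r) (hvan : ∀ t x, dist x0 x < r → G (t, x) = 0) {ε : ℝ} (hε : 0 < ε) :
    ∃ b ∈ testFunctions x0, ∫ x, b x ∂μ < ε ∧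
      ∃ F : Finset T, ∀ t, ∃ s ∈ F, ∀ x, |G (t, x) - G (s, x)| ≤ b x := by
  obtain ⟨φ, hφS, hφI, hφ1, -⟩ := exists_cutoff_mem_testFunctions x0 hr one_pos ∅
  set I := ∫ x, φ x ∂μ
  have hI : 0 ≤ I := integral_nonneg fun x => (hφI x).1
  set δ := ε / (2 * (I + 1))
  have hδ : 0 < δ := by positivity
  have hδI : δ * I < ε / 2 := by
    rw [div_mul_eq_mul_div, div_lt_div_iff₀ (by positivity) two_pos]; nlinarith
  set η := δ / (8 * (K + 1)) with hη_def
  have hη : 0 < η := by positivity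
  have hKη : 2 * K * (2 * η) ≤ δ / 2 := by
    rw [show 2 * (K : ℝ) * (2 * η) = K / (K + 1) * (δ / 2) by rw [hη_def]; field_simp; ring]
    exact mul_le_of_le_one_left (by positivity) ((div_le_one (by positivity)).mpr (by linarith))
  obtain ⟨C, ψ, hψS, hψI, hψ1, hψε⟩ :=
    exists_cutoff_mem_testFunctions_integral_lt (μ := μ) hμ hr hη (half_pos hε)
  obtain ⟨F, hF⟩ := hG.exists_finset_forall_abs_sub_le hG01 C (half_pos hδ)
  refine ⟨δ • φ + ψ, add_mem (Submodule.smul_mem _ δ hφS) hψS, ?_, F, fun t => ?_⟩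
  · simp only [Pi.add_apply, Pi.smul_apply, smul_eq_mul]
    rw [integral_add ((integrable_of_mem_testFunctions hμ hφS).const_mul δ)
      (integrable_of_mem_testFunctions hμ hψS), integral_const_mul]
    linarith
  obtain ⟨s, hsF, hts⟩ := hF t
  refine ⟨s, hsF, abs_sub_le_mul_add_of_forall_mem hG01 hvan (fun x => (hφI x).1)
    (fun x hx => hφ1 x hx (by simp)) (fun x => (hψI x).1) (U := {x | ∃ c ∈ C, dist x c < 2 * η})
    (fun x hx hxU => hψ1 x hx fun c hc => not_lt.mp fun h => hxU ⟨c, hc, h⟩) hδ.le ?_⟩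
  rintro x ⟨c, hc, hxc⟩
  calc |G (t, x) - G (s, x)| ≤ δ / 2 + 2 * K * dist x c := hts x c hc
    _ ≤ δ / 2 + 2 * K * (2 * η) := by gcongr
    _ ≤ δ := by linarith

end Integrals

theorem stmt_7_general
    {T : Type*} [MetricSpace T]
    {X : Type*} [MetricSpace X] [TopologicalSpace.SeparableSpace X]
    [MeasurableSpace X] [BorelSpace X]
    (x0 : X) (σ : ℝ → X → X)
    (hσc : ContinuousOn (fun p : ℝ × X => σ p.1 p.2) (Set.Ioi (0 : ℝ) ×ˢ Set.univ))
    (ν : Measure X) [IsProbabilityMeasure ν]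
    (a : ℕ → ℝ) (ha : ∀ n, 0 < a n)
    (μ : Measure X)
    (hμFin : ∀ r > (0 : ℝ), μ {x | r ≤ dist x0 x} ≠ ⊤)
    (hRV : ∀ h : X → ℝ, Continuous h → (∃ C, ∀ x, |h x| ≤ C) →
      (∃ ρ > (0 : ℝ), ∀ x, dist x0 x < ρ → h x = 0) →
      Tendsto (fun n : ℕ => (n : ℝ) * ∫ x, h (σ (a n)⁻¹ x) ∂ν) atTop (𝓝 (∫ x, h x ∂μ)))
    (f : T × X → ℝ) (hf0 : ∀ z, 0 ≤ f z)
    (hfLip : ∃ K : NNReal, LipschitzWith K f)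
    (r0 : ℝ) (hr0 : 0 < r0) (hfvan : ∀ t x, dist x0 x < r0 → f (t, x) = 0) :
    Continuous (fun t : T => ∫ x, (1 - Real.exp (-f (t, x))) ∂μ)
    ∧ TendstoUniformly
        (fun n : ℕ => fun t : T => (n : ℝ) * ∫ x, (1 - Real.exp (-f (t, σ (a n)⁻¹ x))) ∂ν)
        (fun t : T => ∫ x, (1 - Real.exp (-f (t, x))) ∂μ) atTop := by
  obtain ⟨K, hK⟩ := hfLip
  set G : T × X → ℝ := fun z => 1 - Real.exp (-f z)
  have hG : LipschitzWith K G := hK.one_sub_exp_neg hf0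
  have hG01 : ∀ z, G z ∈ Set.Icc 0 1 := fun z =>
    ⟨sub_nonneg.mpr (Real.exp_le_one_iff.mpr (neg_nonpos.mpr (hf0 z))),
      sub_le_self _ (Real.exp_pos _).le⟩
  have hGvan : ∀ t x, dist x0 x < r0 → G (t, x) = 0 := fun t x hx => by simp [G, hfvan t x hx]
  have hGS : ∀ t, (fun x => G (t, x)) ∈ testFunctions x0 := fun t =>
    ⟨hG.continuous.comp (Continuous.prodMk_right t),
      ⟨1, fun x => abs_le.mpr ⟨by linarith [(hG01 (t, x)).1], (hG01 (t, x)).2⟩⟩, r0, hr0, hGvan t⟩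
  have hσn : ∀ n, Continuous (σ (a n)⁻¹) := fun n =>
    hσc.comp_continuous (continuous_const.prodMk continuous_id)
      fun _ => ⟨inv_pos.mpr (ha n), trivial⟩
  refine ⟨continuous_integral_of_lipschitzWith hμFin hG hGS hr0 hGvan,
    tendstoUniformly_of_forall_exists_finset_abs_sub_le (testFunctions x0)
      (fun (n : ℕ) h => (n : ℝ) * ∫ x, h (σ (a n)⁻¹ x) ∂ν) (fun h => ∫ x, h x ∂μ)
      (fun n _ hu _ hv _ hb => abs_mul_integral_comp_sub_le_of_mem_testFunctions (hσn n)
        n.cast_nonneg hu hv hb)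
      (fun _ hu _ hv _ hb => abs_integral_sub_integral_le_s7 (integrable_of_mem_testFunctions hμFin hu)
        (integrable_of_mem_testFunctions hμFin hv) (integrable_of_mem_testFunctions hμFin hb))
      (fun h ⟨hc, hbdd, hh0⟩ => hRV h hc hbdd hh0) hGS
      fun ε hε => exists_mem_testFunctions_integral_lt_forall_abs_sub_le hμFin hG hG01 hr0 hGvan hε⟩

/-- Uniform convergence of `L_n f` to the continuous limit `Lf` for Lipschitz `f`
when `𝒯` is locally compact (Lemma 5.5 of the paper). -/
theorem stmt_7
    {T : Type*} [MetricSpace T] [CompleteSpace T] [TopologicalSpace.SeparableSpace T]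
    [LocallyCompactSpace T]
    {X : Type*} [MetricSpace X] [CompleteSpace X] [TopologicalSpace.SeparableSpace X]
    [MeasurableSpace X] [BorelSpace X]
    (x0 : X) (σ : ℝ → X → X)
    (hσc : ContinuousOn (fun p : ℝ × X => σ p.1 p.2) (Set.Ioi (0 : ℝ) ×ˢ Set.univ))
    (hσ1 : ∀ x, σ 1 x = x)
    (hσm : ∀ u v : ℝ, 0 < u → 0 < v → ∀ x, σ u (σ v x) = σ (u * v) x)
    (hσ0 : ∀ u : ℝ, 0 < u → σ u x0 = x0)
    (ν : Measure X) [IsProbabilityMeasure ν] (hν0 : ν {x0} = 0)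
    (a : ℕ → ℝ) (ha : ∀ n, 0 < a n) (haTop : Tendsto a atTop atTop)
    (μ : Measure X) (hμ0 : μ ≠ 0)
    (hμFin : ∀ r > (0 : ℝ), μ {x | r ≤ dist x0 x} ≠ ⊤)
    (hRV : ∀ h : X → ℝ, Continuous h → (∃ C, ∀ x, |h x| ≤ C) →
      (∃ ρ > (0 : ℝ), ∀ x, dist x0 x < ρ → h x = 0) →
      Tendsto (fun n : ℕ => (n : ℝ) * ∫ x, h (σ (a n)⁻¹ x) ∂ν) atTop (𝓝 (∫ x, h x ∂μ)))
    (f : T × X → ℝ) (hf0 : ∀ z, 0 ≤ f z) (hfb : ∃ C, ∀ z, f z ≤ C)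
    (hfLip : ∃ K : NNReal, LipschitzWith K f)
    (r0 : ℝ) (hr0 : 0 < r0) (hfvan : ∀ t x, dist x0 x < r0 → f (t, x) = 0) :
    Continuous (fun t : T => ∫ x, (1 - Real.exp (-f (t, x))) ∂μ)
    ∧ TendstoUniformly
        (fun n : ℕ => fun t : T => (n : ℝ) * ∫ x, (1 - Real.exp (-f (t, σ (a n)⁻¹ x))) ∂ν)
        (fun t : T => ∫ x, (1 - Real.exp (-f (t, x))) ∂μ) atTop :=
  stmt_7_general x0 σ hσc ν a ha μ hμFin hRV f hf0 hfLip r0 hr0 hfvan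
end

section
/- Let 𝒯 be a complete separable metric space. For each n ≥ 1 let N_n : Ω → ℕ be a random variable and T_i^n (i ≥ 1) be 𝒯-valued random elements, and let m_n > 0 satisfy E[N_n] = m_n and m_n → ∞. Let λ be a Borel probability measure on 𝒯. Assume: (a) for every bounded continuous g : 𝒯 → ℝ, m_n⁻¹·Σ_{i=1}^{N_n} g(T_i^n) → ∫ g dλ in probability as n → ∞; (b) the family (N_n/m_n)_{n ≥ 1} is uniformly integrable. Let g : 𝒯 → [0,∞) be bounded continuous and let g_n : 𝒯 → [0,∞) be bounded Borel functions with sup_{t ∈ 𝒯} |g_n(t) − g(t)| → 0. Then n·(1 − E[exp(−(n·m_n)⁻¹·Σ_{i=1}^{N_n} g_n(T_i^n))]) → ∫_𝒯 g dλ as n → ∞. -/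
/-!
Write `ξₙ(f) = mₙ⁻¹ ∑_{i ≤ Nₙ} f(Tᵢⁿ)` and `φₜ(x) = t (1 - e^{-x/t})`, so that the quantity in
question is `E[φₙ(ξₙ(gₙ))]`. Since `|ξₙ(g)| ≤ ‖g‖_∞ Nₙ/mₙ` and the `Nₙ/mₙ` are uniformly
integrable, Vitali's theorem upgrades `ξₙ(g) → c := ∫ g dλ` in probability to convergence in `L¹`.
Replacing `g` by `gₙ` costs at most `sup |gₙ - g| · E[Nₙ/mₙ] = sup |gₙ - g|`. Finally `φₙ` is
`1`-Lipschitz on `[0, ∞)` and `φₙ(c) → c`, so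
`|E[φₙ(ξₙ(gₙ))] - c| ≤ E|ξₙ(gₙ) - c| + |φₙ(c) - c| → 0`.
-/

open MeasureTheory Filter Topology

theorem abs_exp_neg_sub_exp_neg_le_s8 {a b : ℝ} (ha : 0 ≤ a) (hb : 0 ≤ b) :
    |Real.exp (-a) - Real.exp (-b)| ≤ |a - b| := by
  wlog hab : a ≤ b generalizing a b
  · rw [abs_sub_comm, abs_sub_comm a]; exact this hb ha (le_of_not_ge hab)
  have hsplit : Real.exp (-a) - Real.exp (-b) = Real.exp (-a) * (1 - Real.exp (-(b - a))) := by
    rw [mul_sub, ← Real.exp_add]; ring_nf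
  have h1 : Real.exp (-a) ≤ 1 := Real.exp_le_one_iff.2 (by linarith)
  have h2 : 1 - Real.exp (-(b - a)) ≤ b - a := by linarith [Real.add_one_le_exp (-(b - a))]
  have h3 : 0 ≤ 1 - Real.exp (-(b - a)) := by
    linarith [Real.exp_le_one_iff.2 (show -(b - a) ≤ 0 by linarith)]
  rw [hsplit, abs_of_nonneg (mul_nonneg (Real.exp_pos _).le h3), abs_of_nonpos (by linarith)]
  nlinarith

theorem tendsto_mul_one_sub_exp_neg_div (c : ℝ) :
    Tendsto (fun t : ℝ => t * (1 - Real.exp (-c / t))) atTop (𝓝 c) := by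
  have hbound : ∀ᶠ t in atTop, |t * (1 - Real.exp (-c / t)) - c| ≤ c ^ 2 / t := by
    filter_upwards [eventually_ge_atTop (|c| + 1)] with t ht
    have ht0 : 0 < t := by linarith [abs_nonneg c]
    have hx : |-c / t| ≤ 1 := by
      rw [abs_div, abs_neg, abs_of_pos ht0, div_le_one ht0]; linarith
    have h := Real.abs_exp_sub_one_sub_id_le hx
    have heq : t * (1 - Real.exp (-c / t)) - c = -t * (Real.exp (-c / t) - 1 - -c / t) := by
      field_simp; ring
    rw [heq, abs_mul, abs_neg, abs_of_pos ht0]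
    calc t * |Real.exp (-c / t) - 1 - -c / t| ≤ t * (-c / t) ^ 2 := by gcongr
      _ = c ^ 2 / t := by field_simp
  rw [tendsto_iff_dist_tendsto_zero]
  exact squeeze_zero' (Eventually.of_forall fun _ => dist_nonneg) hbound
    (tendsto_const_nhds.div_atTop tendsto_id)

theorem tendsto_of_forall_eventually_abs_sub_le {ι : Type*} {l : Filter ι} {a u : ι → ℝ}
    {c : ℝ} (hu : Tendsto u l (𝓝 0)) (h : ∀ θ > (0 : ℝ), ∀ᶠ i in l, |a i - c| ≤ θ + u i) :
    Tendsto a l (𝓝 c) :=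
  Metric.tendsto_nhds.2 fun ε hε => by
    filter_upwards [h (ε / 2) (half_pos hε), hu.eventually (gt_mem_nhds (half_pos hε))]
      with i hi hui
    rw [Real.dist_eq]
    linarith

section

variable {α ι : Type*} [MeasurableSpace α] {μ : Measure α}

theorem unifIntegrable_of_integral_tail_le {X : ι → α → ℝ} (hXm : ∀ i, Measurable (X i))
    (hXi : ∀ i, Integrable (X i) μ) (hX0 : ∀ i x, 0 ≤ X i x)
    (h : ∀ ε > (0 : ℝ), ∃ K : ℝ, ∀ i, ∫ x, (if K < X i x then X i x else 0) ∂μ ≤ ε) :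
    UnifIntegrable X 1 μ := by
  refine unifIntegrable_of le_rfl ENNReal.one_ne_top (fun i => (hXm i).aestronglyMeasurable)
    fun ε hε => ?_
  obtain ⟨K, hK⟩ := h ε hε
  refine ⟨(max K 0 + 1).toNNReal, fun i => ?_⟩
  set Y : α → ℝ := fun x => if K < X i x then X i x else 0
  have hY0 : ∀ x, 0 ≤ Y x := fun x => by simp only [Y]; split_ifs <;> simp [hX0 i x]
  have hYm : Measurable Y :=
    (hXm i).ite (measurableSet_lt measurable_const (hXm i)) measurable_const
  have hYi : Integrable Y μ := (hXi i).mono' hYm.aestronglyMeasurable (ae_of_all _ fun x => by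
    simp only [Y, Real.norm_eq_abs]; split_ifs <;> simp [abs_of_nonneg (hX0 i x), hX0 i x])
  calc eLpNorm ({x | (max K 0 + 1).toNNReal ≤ ‖X i x‖₊}.indicator (X i)) 1 μ
      ≤ eLpNorm Y 1 μ := by
        refine eLpNorm_mono fun x => ?_
        rw [norm_indicator_eq_indicator_norm]
        refine Set.indicator_le' (fun x hx => ?_) (fun _ _ => norm_nonneg _) x
        have hKX : K < X i x := by
          have := (Real.toNNReal_le_iff_le_coe).1 hx
          rw [coe_nnnorm, Real.norm_of_nonneg (hX0 i x)] at this
          linarith [le_max_left K 0]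
        simp [Y, hKX]
    _ = ENNReal.ofReal (∫ x, Y x ∂μ) := by
        rw [eLpNorm_one_eq_lintegral_enorm, ← ofReal_integral_norm_eq_lintegral_enorm hYi]
        simp_rw [Real.norm_of_nonneg (hY0 _)]
    _ ≤ ENNReal.ofReal ε := ENNReal.ofReal_le_ofReal (hK i)

variable {β : Type*} [NormedAddCommGroup β] {p : ENNReal}

theorem UnifIntegrable.of_norm_le_const_mul {f : ι → α → β} {g : ι → α → ℝ}
    (hg : UnifIntegrable g p μ) {C : ℝ} (hfg : ∀ i x, ‖f i x‖ ≤ C * ‖g i x‖) :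
    UnifIntegrable f p μ := by
  intro ε hε
  obtain ⟨δ, hδ, h⟩ := hg (show 0 < ε / (|C| + 1) by positivity)
  refine ⟨δ, hδ, fun i s hs hμs => ?_⟩
  calc eLpNorm (s.indicator (f i)) p μ
      ≤ ENNReal.ofReal (|C| + 1) * eLpNorm (s.indicator (g i)) p μ := by
        refine eLpNorm_le_mul_eLpNorm_of_ae_le_mul (ae_of_all _ fun x => ?_) p
        by_cases hx : x ∈ s
        · simp only [Set.indicator_of_mem hx]
          exact (hfg i x).trans (by gcongr; linarith [le_abs_self C])
        · simp [Set.indicator_of_notMem hx]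
    _ ≤ ENNReal.ofReal (|C| + 1) * ENNReal.ofReal (ε / (|C| + 1)) := by
        gcongr; exact h i s hs hμs
    _ = ENNReal.ofReal ε := by
        rw [← ENNReal.ofReal_mul (by positivity), mul_div_cancel₀ _ (by positivity)]

theorem tendsto_integral_norm_sub_of_tendstoInMeasure [IsFiniteMeasure μ] {f : ℕ → α → β}
    {g : α → β} (hf : ∀ n, AEStronglyMeasurable (f n) μ) (hg : MemLp g 1 μ)
    (hui : UnifIntegrable f 1 μ) (hfg : TendstoInMeasure μ f atTop g) :
    Tendsto (fun n => ∫ x, ‖f n x - g x‖ ∂μ) atTop (𝓝 0) := by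
  have hL1 := tendsto_Lp_finite_of_tendstoInMeasure le_rfl ENNReal.one_ne_top hf hg hui hfg
  have h := (ENNReal.tendsto_toReal ENNReal.zero_ne_top).comp hL1
  refine h.congr fun n => ?_
  rw [Function.comp_apply, eLpNorm_one_eq_lintegral_enorm]
  exact (integral_norm_eq_lintegral_enorm ((hf n).sub hg.1)).symm

theorem tendstoInMeasure_of_tendsto_measure_lt_dist {E : Type*} [PseudoMetricSpace E]
    {f : ι → α → E} {l : Filter ι} {g : α → E}
    (h : ∀ ε > (0 : ℝ), Tendsto (fun i => μ {x | ε < dist (f i x) (g x)}) l (𝓝 0)) :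
    TendstoInMeasure μ f l g :=
  tendstoInMeasure_iff_dist.2 fun ε hε =>
    tendsto_of_tendsto_of_tendsto_of_le_of_le tendsto_const_nhds (h (ε / 2) (half_pos hε))
      (fun _ => zero_le) fun _ => measure_mono fun _ hx => (half_lt_self hε).trans_le hx

end

theorem abs_sub_le_integral_add_abs_mul_one_sub_exp_neg_div {Ω : Type*} [MeasurableSpace Ω]
    {P : Measure Ω} [IsProbabilityMeasure P] {S B : Ω → ℝ} (hS : AEStronglyMeasurable S P)
    (hS0 : ∀ ω, 0 ≤ S ω) {c : ℝ} (hc : 0 ≤ c) (hB : Integrable B P)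
    (hSB : ∀ ω, |S ω - c| ≤ B ω) {t : ℝ} (ht : 0 < t) :
    |t * (1 - ∫ ω, Real.exp (-S ω / t) ∂P) - c|
      ≤ ∫ ω, B ω ∂P + |t * (1 - Real.exp (-c / t)) - c| := by
  have hE : Integrable (fun ω => Real.exp (-S ω / t)) P :=
    .of_bound (hS.aemeasurable.neg.div_const t).exp.aestronglyMeasurable 1
      (ae_of_all _ fun ω => by
        rw [Real.norm_of_nonneg (Real.exp_pos _).le, Real.exp_le_one_iff]
        exact div_nonpos_of_nonpos_of_nonneg (neg_nonpos.2 (hS0 ω)) ht.le)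
  have hsplit : t * (1 - ∫ ω, Real.exp (-S ω / t) ∂P) - c
      = ∫ ω, t * (Real.exp (-c / t) - Real.exp (-S ω / t)) ∂P
        + (t * (1 - Real.exp (-c / t)) - c) := by
    rw [integral_const_mul, integral_sub (integrable_const _) hE, integral_const]
    simp only [probReal_univ, one_smul]
    ring
  have hpt : ∀ ω, |t * (Real.exp (-c / t) - Real.exp (-S ω / t))| ≤ B ω := fun ω =>
    calc |t * (Real.exp (-c / t) - Real.exp (-S ω / t))|
        ≤ t * |c / t - S ω / t| := by
          rw [abs_mul, abs_of_pos ht, neg_div, neg_div]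
          exact mul_le_mul_of_nonneg_left
            (abs_exp_neg_sub_exp_neg_le_s8 (by positivity) (div_nonneg (hS0 ω) ht.le)) ht.le
      _ = |S ω - c| := by
          rw [← sub_div, abs_div, abs_of_pos ht, abs_sub_comm]; field_simp
      _ ≤ B ω := hSB ω
  rw [hsplit]
  grw [abs_add_le, abs_integral_le_integral_abs,
    integral_mono_of_nonneg (ae_of_all _ fun _ => abs_nonneg _) hB (ae_of_all _ hpt)]

theorem measurable_sum_range_of_measurable {Ω : Type*} [MeasurableSpace Ω] {N : Ω → ℕ}
    (hN : Measurable N) {f : ℕ → Ω → ℝ} (hf : ∀ i, Measurable (f i)) :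
    Measurable fun ω => ∑ i ∈ Finset.range (N ω), f i ω := by
  have h : Measurable fun p : Ω × ℕ => ∑ i ∈ Finset.range p.2, f i p.1 :=
    measurable_from_prod_countable_left fun k => by
      simpa using Finset.measurable_sum (Finset.range k) fun i _ => hf i
  exact h.comp (measurable_id.prodMk hN)

section TriangularArray

variable {T Ω : Type*}

/-- `ξₙ(f)` for the normalized point process `ξₙ = mₙ⁻¹ ∑_{i ≤ Nₙ} δ_{Tᵢⁿ}`; the indices
`1, …, Nₙ` of the paper are `0, …, Nₙ - 1` here. -/
noncomputable def normalizedSum (m : ℕ → ℝ) (N : ℕ → Ω → ℕ) (Tt : ℕ → ℕ → Ω → T) (n : ℕ)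
    (f : T → ℝ) (ω : Ω) : ℝ :=
  (m n)⁻¹ * ∑ i ∈ Finset.range (N n ω), f (Tt n i ω)

variable {m : ℕ → ℝ} {N : ℕ → Ω → ℕ} {Tt : ℕ → ℕ → Ω → T} {n : ℕ}

theorem normalizedSum_nonneg (hm : 0 < m n) {f : T → ℝ} (hf : ∀ t, 0 ≤ f t) (ω : Ω) :
    0 ≤ normalizedSum m N Tt n f ω :=
  mul_nonneg (inv_nonneg.2 hm.le) (Finset.sum_nonneg fun _ _ => hf _)

theorem abs_normalizedSum_sub_le (hm : 0 < m n) {f g : T → ℝ} {θ : ℝ}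
    (hfg : ∀ t, |f t - g t| ≤ θ) (ω : Ω) :
    |normalizedSum m N Tt n f ω - normalizedSum m N Tt n g ω| ≤ θ * (N n ω / m n) := by
  rw [normalizedSum, normalizedSum, ← mul_sub, ← Finset.sum_sub_distrib, abs_mul, abs_inv,
    abs_of_pos hm]
  grw [Finset.abs_sum_le_sum_abs, Finset.sum_le_card_nsmul _ _ θ fun i _ => hfg _]
  rw [Finset.card_range, nsmul_eq_mul, div_eq_mul_inv]
  exact le_of_eq (by ring)

theorem abs_normalizedSum_le (hm : 0 < m n) {f : T → ℝ} {C : ℝ} (hf : ∀ t, |f t| ≤ C)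
    (ω : Ω) : |normalizedSum m N Tt n f ω| ≤ C * (N n ω / m n) := by
  simpa [normalizedSum] using abs_normalizedSum_sub_le (N := N) (Tt := Tt) (g := 0) hm
    (by simpa using hf) ω

variable [MeasurableSpace T] [MeasurableSpace Ω] {P : Measure Ω}

theorem measurable_normalizedSum (hN : Measurable (N n)) (hT : ∀ i, Measurable (Tt n i))
    {f : T → ℝ} (hf : Measurable f) : Measurable (normalizedSum m N Tt n f) :=
  (measurable_sum_range_of_measurable hN fun i => hf.comp (hT i)).const_mul _

theorem integrable_count_div (hm : 0 < m n) (hmean : ∫ ω, (N n ω : ℝ) ∂P = m n) :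
    Integrable (fun ω => (N n ω : ℝ) / m n) P :=
  (Integrable.of_integral_ne_zero (hmean.trans_ne hm.ne')).div_const _

theorem integral_count_div (hm : 0 < m n) (hmean : ∫ ω, (N n ω : ℝ) ∂P = m n) :
    ∫ ω, (N n ω : ℝ) / m n ∂P = 1 := by
  rw [integral_div, hmean, div_self hm.ne']

theorem integrable_normalizedSum (hm : 0 < m n) (hmean : ∫ ω, (N n ω : ℝ) ∂P = m n)
    (hN : Measurable (N n)) (hT : ∀ i, Measurable (Tt n i)) {f : T → ℝ} (hf : Measurable f)
    {C : ℝ} (hfC : ∀ t, |f t| ≤ C) : Integrable (normalizedSum m N Tt n f) P :=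
  ((integrable_count_div hm hmean).const_mul C).mono'
    (measurable_normalizedSum hN hT hf).aestronglyMeasurable
    (ae_of_all _ (abs_normalizedSum_le hm hfC))

theorem tendsto_integral_abs_normalizedSum_sub [IsFiniteMeasure P] (hm : ∀ n, 0 < m n)
    (hmean : ∀ n, ∫ ω, (N n ω : ℝ) ∂P = m n) (hN : ∀ n, Measurable (N n))
    (hT : ∀ n i, Measurable (Tt n i))
    (hUI : ∀ ε > (0 : ℝ), ∃ K : ℝ, ∀ n,
      ∫ ω, (if K < (N n ω : ℝ) / m n then (N n ω : ℝ) / m n else 0) ∂P ≤ ε)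
    {f : T → ℝ} (hf : Measurable f) {C : ℝ} (hfC : ∀ t, |f t| ≤ C) {c : ℝ}
    (hconv : ∀ ε > (0 : ℝ),
      Tendsto (fun n => P {ω | ε < |normalizedSum m N Tt n f ω - c|}) atTop (𝓝 0)) :
    Tendsto (fun n => ∫ ω, |normalizedSum m N Tt n f ω - c| ∂P) atTop (𝓝 0) := by
  have hUIcount : UnifIntegrable (fun n ω => (N n ω : ℝ) / m n) 1 P :=
    unifIntegrable_of_integral_tail_le
      (fun n => (measurable_from_nat.comp (hN n)).div_const _)
      (fun n => integrable_count_div (hm n) (hmean n))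
      (fun n ω => div_nonneg (Nat.cast_nonneg _) (hm n).le) hUI
  refine tendsto_integral_norm_sub_of_tendstoInMeasure
    (fun n => (measurable_normalizedSum (hN n) (hT n) hf).aestronglyMeasurable) (memLp_const c)
    (UnifIntegrable.of_norm_le_const_mul hUIcount (C := C) fun n ω => ?_)
    (tendstoInMeasure_of_tendsto_measure_lt_dist hconv)
  rw [Real.norm_eq_abs, Real.norm_of_nonneg (div_nonneg (Nat.cast_nonneg _) (hm n).le)]
  exact abs_normalizedSum_le (hm n) hfC ω

theorem abs_laplace_normalizedSum_sub_le [IsProbabilityMeasure P] (hm : 0 < m n)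
    (hmean : ∫ ω, (N n ω : ℝ) ∂P = m n) (hN : Measurable (N n)) (hT : ∀ i, Measurable (Tt n i))
    {f g : T → ℝ} (hf : Measurable f) (hf0 : ∀ t, 0 ≤ f t) (hg : Measurable g) {C : ℝ}
    (hgC : ∀ t, |g t| ≤ C) {θ : ℝ} (hfg : ∀ t, |f t - g t| ≤ θ) {c : ℝ} (hc : 0 ≤ c)
    {s : ℝ} (hs : 0 < s) :
    |s * (1 - ∫ ω, Real.exp (-normalizedSum m N Tt n f ω / s) ∂P) - c|
      ≤ θ + ∫ ω, |normalizedSum m N Tt n g ω - c| ∂P + |s * (1 - Real.exp (-c / s)) - c| := by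
  have hcount := integrable_count_div hm hmean
  have hdev : Integrable (fun ω => |normalizedSum m N Tt n g ω - c|) P :=
    ((integrable_normalizedSum hm hmean hN hT hg hgC).sub (integrable_const c)).abs
  have hB : Integrable (fun ω => θ * (N n ω / m n) + |normalizedSum m N Tt n g ω - c|) P :=
    (hcount.const_mul θ).add hdev
  have h := abs_sub_le_integral_add_abs_mul_one_sub_exp_neg_div
    (measurable_normalizedSum hN hT hf).aestronglyMeasurable (normalizedSum_nonneg hm hf0) hc
    hB (fun ω => ?_) hs
  · rwa [integral_add (hcount.const_mul θ) hdev, integral_const_mul,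
      integral_count_div hm hmean, mul_one] at h
  · linarith [abs_sub_le (normalizedSum m N Tt n f ω) (normalizedSum m N Tt n g ω) c,
      abs_normalizedSum_sub_le (N := N) (Tt := Tt) hm hfg ω]

end TriangularArray

theorem stmt_8_general
    {T : Type*} [MetricSpace T]
    [MeasurableSpace T] [BorelSpace T]
    {Ω : Type*} [MeasurableSpace Ω] (P : Measure Ω) [IsProbabilityMeasure P]
    (N : ℕ → Ω → ℕ) (hNmeas : ∀ n, Measurable (N n))
    (Tt : ℕ → ℕ → Ω → T) (hTmeas : ∀ n i, Measurable (Tt n i))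
    (m : ℕ → ℝ) (hm : ∀ n, 0 < m n)
    (hmean : ∀ n, ∫ ω, (N n ω : ℝ) ∂P = m n)
    (lam : Measure T)
    (hemp : ∀ g : T → ℝ, Continuous g → (∃ C, ∀ t, |g t| ≤ C) →
      ∀ ε > (0 : ℝ), Tendsto (fun n : ℕ =>
        P {ω | ε < |(m n)⁻¹ * (∑ i ∈ Finset.range (N n ω), g (Tt n i ω)) - ∫ t, g t ∂lam|})
        atTop (𝓝 0))
    (hUI : ∀ ε > (0 : ℝ), ∃ K : ℝ, ∀ n,
      ∫ ω, (if K < (N n ω : ℝ) / m n then (N n ω : ℝ) / m n else 0) ∂P ≤ ε)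
    (g : T → ℝ) (hgc : Continuous g) (hg0 : ∀ t, 0 ≤ g t) (hgb : ∃ C, ∀ t, g t ≤ C)
    (gn : ℕ → T → ℝ) (hgnmeas : ∀ n, Measurable (gn n)) (hgn0 : ∀ n t, 0 ≤ gn n t)
    (hgnconv : ∀ ε > (0 : ℝ), ∃ n0 : ℕ, ∀ n ≥ n0, ∀ t, |gn n t - g t| ≤ ε) :
    Tendsto (fun n : ℕ => (n : ℝ) *
        (1 - ∫ ω, Real.exp (-((n : ℝ) * m n)⁻¹ *
          ∑ i ∈ Finset.range (N n ω), gn n (Tt n i ω)) ∂P))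
      atTop (𝓝 (∫ t, g t ∂lam)) := by
  obtain ⟨C, hC⟩ := hgb
  have hgC : ∀ t, |g t| ≤ C := fun t => (abs_of_nonneg (hg0 t)).trans_le (hC t)
  have hL1 := tendsto_integral_abs_normalizedSum_sub hm hmean hNmeas hTmeas hUI
    hgc.measurable hgC (hemp g hgc ⟨C, hgC⟩)
  have hscale := tendsto_iff_norm_sub_tendsto_zero.1
    ((tendsto_mul_one_sub_exp_neg_div (∫ t, g t ∂lam)).comp tendsto_natCast_atTop_atTop)
  refine tendsto_of_forall_eventually_abs_sub_le (by simpa only [add_zero] using hL1.add hscale)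
    fun θ hθ => ?_
  obtain ⟨n0, hn0⟩ := hgnconv θ hθ
  filter_upwards [eventually_ge_atTop (max n0 1)] with n hn
  have hexp : ∀ ω, -((n : ℝ) * m n)⁻¹ * ∑ i ∈ Finset.range (N n ω), gn n (Tt n i ω)
      = -normalizedSum m N Tt n (gn n) ω / n := fun ω => by
    rw [normalizedSum, mul_inv]; ring
  simp only [hexp]
  refine (abs_laplace_normalizedSum_sub_le (hm n) (hmean n) (hNmeas n) (hTmeas n) (hgnmeas n)
    (hgn0 n) hgc.measurable hgC (hn0 n (le_of_max_le_left hn)) (integral_nonneg hg0)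
    (by exact_mod_cast le_of_max_le_right hn)).trans_eq ?_
  simp only [Function.comp_apply, Real.norm_eq_abs]
  ring

/-- Laplace functional limit for triangular-array point processes
(Lemma 5.6 of the paper). -/
theorem stmt_8
    {T : Type*} [MetricSpace T] [CompleteSpace T] [TopologicalSpace.SeparableSpace T]
    [MeasurableSpace T] [BorelSpace T]
    {Ω : Type*} [MeasurableSpace Ω] (P : Measure Ω) [IsProbabilityMeasure P]
    (N : ℕ → Ω → ℕ) (hNmeas : ∀ n, Measurable (N n))
    (Tt : ℕ → ℕ → Ω → T) (hTmeas : ∀ n i, Measurable (Tt n i))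
    (m : ℕ → ℝ) (hm : ∀ n, 0 < m n)
    (hmean : ∀ n, ∫ ω, (N n ω : ℝ) ∂P = m n)
    (hmTop : Tendsto m atTop atTop)
    (lam : Measure T) [IsProbabilityMeasure lam]
    (hemp : ∀ g : T → ℝ, Continuous g → (∃ C, ∀ t, |g t| ≤ C) →
      ∀ ε > (0 : ℝ), Tendsto (fun n : ℕ =>
        P {ω | ε < |(m n)⁻¹ * (∑ i ∈ Finset.range (N n ω), g (Tt n i ω)) - ∫ t, g t ∂lam|})
        atTop (𝓝 0))
    (hUI : ∀ ε > (0 : ℝ), ∃ K : ℝ, ∀ n,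
      ∫ ω, (if K < (N n ω : ℝ) / m n then (N n ω : ℝ) / m n else 0) ∂P ≤ ε)
    (g : T → ℝ) (hgc : Continuous g) (hg0 : ∀ t, 0 ≤ g t) (hgb : ∃ C, ∀ t, g t ≤ C)
    (gn : ℕ → T → ℝ) (hgnmeas : ∀ n, Measurable (gn n)) (hgn0 : ∀ n t, 0 ≤ gn n t)
    (hgnb : ∀ n, ∃ C, ∀ t, gn n t ≤ C)
    (hgnconv : ∀ ε > (0 : ℝ), ∃ n0 : ℕ, ∀ n ≥ n0, ∀ t, |gn n t - g t| ≤ ε) :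
    Tendsto (fun n : ℕ => (n : ℝ) *
        (1 - ∫ ω, Real.exp (-((n : ℝ) * m n)⁻¹ *
          ∑ i ∈ Finset.range (N n ω), gn n (Tt n i ω)) ∂P))
      atTop (𝓝 (∫ t, g t ∂lam)) :=
  stmt_8_general P N hNmeas Tt hTmeas m hm hmean lam hemp hUI g hgc hg0 hgb gn hgnmeas hgn0 hgnconv
end

section
/- Let λ be a finite nonzero Borel measure on 𝒯 and let ν be a Borel probability measure on 𝒳 with ν({0}) = 0 that is regularly varying with scaling sequence (a_n) and limit measure μ. Let N be a random variable with Poisson distribution of mean λ(𝒯), let T_1,T_2,… be i.i.d. 𝒯-valued random elements with law λ/λ(𝒯), and let X_1,X_2,… be i.i.d. 𝒳-valued random elements with law ν, with N, (T_i)_{i≥1}, (X_i)_{i≥1} mutually independent (so that Σ_{i=1}^{N} ε_{(T_i,X_i)} is a Poisson point process on 𝒯×𝒳 with intensity λ⊗ν). Then for every bounded continuous f : 𝒯×𝒳 → [0,∞) for which there exists r > 0 with f(t,x) = 0 whenever d(0,x) < r, one has n·E[1 − exp(−Σ_{i=1}^{N} f(T_i, a_n⁻¹•X_i))] → ∫_{𝒯×𝒳}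 (1 − e^{−f(t,x)}) λ(dt)μ(dx) as n → ∞. -/
/-!
Conditionally on `N = j`, the marked points `(T_i, X_i)`, `i < j`, are i.i.d. with law
`λ/λ(𝒯) ⊗ ν`; summing over `j` against the Poisson weights gives the Laplace functional
`E exp (-∑_{i<N} φ (T_i, X_i)) = exp (-∫ (1 - e^{-φ}) d(λ ⊗ ν))`. For `φ = f (·, a_n⁻¹ • ·)` the
exponent is `c_n = ∫ h (a_n⁻¹ • x) ν(dx)` with `h x = ∫ (1 - e^{-f (t, x)}) λ(dt)`. As `h` is
bounded, continuous and vanishes near `0`, regular variation gives `n c_n → ∫ h dμ`, which is the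
right-hand side by Fubini; and `n (1 - e^{-c_n}) - n c_n = O(n c_n²) → 0`.
-/

open MeasureTheory Filter Metric Topology Set

theorem MeasureTheory.Measure.ext_of_pi_prod {ι α β : Type*} [Fintype ι] [MeasurableSpace α]
    [MeasurableSpace β] {m m' : Measure (ι → α × β)} [IsFiniteMeasure m]
    (h : ∀ (A : ι → Set α) (B : ι → Set β), (∀ i, MeasurableSet (A i)) →
      (∀ i, MeasurableSet (B i)) →
      m (univ.pi fun i => A i ×ˢ B i) = m' (univ.pi fun i => A i ×ˢ B i)) :
    m = m' := by
  set R : Set (Set (α × β)) := image2 (· ×ˢ ·) {s | MeasurableSet s} {t | MeasurableSet t}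
  have hgen := generateFrom_pi_eq (C := fun _ : ι => R) fun _ =>
    isCountablySpanning_measurableSet.prod isCountablySpanning_measurableSet
  rw [show (fun _ : ι => MeasurableSpace.generateFrom R) = fun _ => Prod.instMeasurableSpace
    from funext fun _ => generateFrom_prod] at hgen
  refine ext_of_generate_finite _ hgen (IsPiSystem.pi fun _ => isPiSystem_prod) ?_ ?_
  · rintro _ ⟨s, hs, rfl⟩
    choose A hA B hB hAB using fun i => hs i (mem_univ i)
    simpa only [hAB] using h A B hA hB
  · simpa using h (fun _ => univ) (fun _ => univ) (fun _ => .univ) (fun _ => .univ)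

lemma hasSum_exp_neg_mul_pow_div_factorial_mul_pow (Λ q : ℝ) :
    HasSum (fun j : ℕ => Real.exp (-Λ) * Λ ^ j / j.factorial * q ^ j)
      (Real.exp (-(Λ * (1 - q)))) := by
  have hterm : (fun j : ℕ => Real.exp (-Λ) * Λ ^ j / j.factorial * q ^ j) =
      fun j => Real.exp (-Λ) * ((Λ * q) ^ j / j.factorial) := by
    funext j
    rw [mul_pow]
    ring
  rw [hterm, show -(Λ * (1 - q)) = -Λ + Λ * q by ring, Real.exp_add, Real.exp_eq_exp_ℝ]
  exact (NormedSpace.expSeries_div_hasSum_exp (Λ * q)).mul_left _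

lemma tendsto_nat_mul_one_sub_exp_neg {c : ℕ → ℝ} {L : ℝ}
    (h : Tendsto (fun n : ℕ => (n : ℝ) * c n) atTop (𝓝 L)) :
    Tendsto (fun n : ℕ => (n : ℝ) * (1 - Real.exp (-c n))) atTop (𝓝 L) := by
  have hc : Tendsto c atTop (𝓝 0) := by
    refine (h.div_atTop tendsto_natCast_atTop_atTop).congr' ?_
    filter_upwards [eventually_ne_atTop 0] with n hn
    field_simp
  have herr : Tendsto (fun n : ℕ => (n : ℝ) * c n * c n) atTop (𝓝 0) := by
    simpa using h.mul hc
  have hclose :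
      Tendsto (fun n : ℕ => (n : ℝ) * (1 - Real.exp (-c n)) - n * c n) atTop (𝓝 0) := by
    refine squeeze_zero_norm' ?_ (by simpa only [norm_zero] using herr.norm)
    filter_upwards [hc.eventually (closedBall_mem_nhds 0 one_pos)] with n hn
    have hn' : |-c n| ≤ 1 := by simpa [abs_neg] using hn
    calc ‖(n : ℝ) * (1 - Real.exp (-c n)) - n * c n‖
        = |(n : ℝ)| * |Real.exp (-c n) - 1 - -c n| := by
          rw [Real.norm_eq_abs, ← abs_mul, ← abs_neg]
          ring_nf
      _ ≤ |(n : ℝ)| * (-c n) ^ 2 := by gcongr; exact Real.abs_exp_sub_one_sub_id_le hn'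
      _ = ‖(n : ℝ) * c n * c n‖ := by
          rw [neg_sq, Real.norm_eq_abs, mul_assoc, abs_mul, ← sq, abs_sq]
  simpa using hclose.add h

lemma sFinite_of_measure_le_dist_ne_top {X : Type*} [MetricSpace X] [MeasurableSpace X]
    [OpensMeasurableSpace X] {μ : Measure X} (x0 : X)
    (hμ : ∀ ρ > (0 : ℝ), μ {x | ρ ≤ dist x0 x} ≠ ⊤) : SFinite μ := by
  have : SigmaFinite (μ.restrict {x0}ᶜ) := by
    refine Measure.sigmaFinite_of_countable
      (S := range fun n : ℕ => insert x0 {x | 1 / (n + 1 : ℝ) ≤ dist x0 x})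
      (countable_range _) ?_ ?_
    · rintro _ ⟨n, rfl⟩
      rw [Measure.restrict_apply' (measurableSet_singleton x0).compl]
      exact (measure_mono (t := {x | 1 / (n + 1 : ℝ) ≤ dist x0 x})
        fun x hx => hx.1.resolve_left hx.2).trans_lt (hμ _ Nat.one_div_pos_of_nat).lt_top
    · refine eq_univ_of_forall fun x => ?_
      rcases eq_or_ne x x0 with rfl | hx
      · exact mem_sUnion_of_mem (mem_insert x _) ⟨0, rfl⟩
      · obtain ⟨n, hn⟩ := exists_nat_one_div_lt (dist_pos.2 hx.symm)
        exact mem_sUnion_of_mem (Or.inr hn.le) ⟨n, rfl⟩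
  rw [← Measure.restrict_add_restrict_compl (μ := μ) (measurableSet_singleton x0),
    Measure.restrict_singleton]
  infer_instance

lemma abs_one_sub_exp_neg_le_one {x : ℝ} (hx : 0 ≤ x) : |1 - Real.exp (-x)| ≤ 1 := by
  have := Real.exp_le_one_iff.2 (neg_nonpos.2 hx)
  rw [abs_le]
  constructor <;> linarith [Real.exp_pos (-x)]

lemma continuous_integral_of_abs_le {T X : Type*} [TopologicalSpace T] [MeasurableSpace T]
    [OpensMeasurableSpace T] [TopologicalSpace X] [FirstCountableTopology X] {F : T × X → ℝ}
    (hF : Continuous F) {C : ℝ} (hC : ∀ z, |F z| ≤ C) (lam : Measure T) [IsFiniteMeasure lam] :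
    Continuous fun x => ∫ t, F (t, x) ∂lam :=
  continuous_of_dominated
    (fun _ => (hF.comp (continuous_id.prodMk continuous_const)).aestronglyMeasurable)
    (fun x => ae_of_all _ fun t => hC (t, x)) (integrable_const C)
    (ae_of_all _ fun _ => hF.comp (continuous_const.prodMk continuous_id))

lemma integrable_prod_of_eq_zero_of_dist_lt {T X : Type*} [MeasurableSpace T] [MetricSpace X]
    [MeasurableSpace X] {lam : Measure T} [IsFiniteMeasure lam] {μ : Measure X} [SFinite μ]
    {x0 : X} {r : ℝ} (hμ : μ {x | r ≤ dist x0 x} ≠ ⊤) {F : T × X → ℝ}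
    (hF : AEStronglyMeasurable F (lam.prod μ)) {C : ℝ} (hC : ∀ z, |F z| ≤ C)
    (hF0 : ∀ t x, dist x0 x < r → F (t, x) = 0) : Integrable F (lam.prod μ) := by
  have hS : lam.prod μ (univ ×ˢ {x | r ≤ dist x0 x}) < ⊤ := by
    rw [Measure.prod_prod]
    exact ENNReal.mul_lt_top (measure_lt_top _ _) hμ.lt_top
  refine IntegrableOn.integrable_of_forall_notMem_eq_zero
    (IntegrableOn.of_bound hS hF.restrict C (ae_of_all _ hC)) fun z hz => hF0 z.1 z.2 ?_
  exact not_le.1 fun h => hz ⟨trivial, h⟩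

/-- The points `(Tt i, Xx i)`, `i < N`, of the standard construction of a Poisson process on
`T × X` with intensity `lam ⊗ ν`. -/
structure IsMarkedPoissonProcess {Ω T X : Type*} [MeasurableSpace Ω] [MeasurableSpace T]
    [MeasurableSpace X] (P : Measure Ω) (N : Ω → ℕ) (Tt : ℕ → Ω → T) (Xx : ℕ → Ω → X)
    (lam : Measure T) (ν : Measure X) : Prop where
  measurable_count : Measurable N
  measurable_point : ∀ i, Measurable (Tt i)
  measurable_mark : ∀ i, Measurable (Xx i)
  measure_count_eq : ∀ j : ℕ, P {ω | N ω = j} =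
    ENNReal.ofReal (Real.exp (-(lam univ).toReal) * (lam univ).toReal ^ j / (j.factorial : ℝ))
  map_point : ∀ i, Measure.map (Tt i) P = (lam univ)⁻¹ • lam
  map_mark : ∀ i, Measure.map (Xx i) P = ν
  measure_inter_eq : ∀ (j n : ℕ) (A : ℕ → Set T) (B : ℕ → Set X),
    (∀ i, MeasurableSet (A i)) → (∀ i, MeasurableSet (B i)) →
    P ({ω | N ω = j} ∩ ⋂ i ∈ Finset.range n, ({ω | Tt i ω ∈ A i} ∩ {ω | Xx i ω ∈ B i}))
      = P {ω | N ω = j} *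
        ∏ i ∈ Finset.range n, (P {ω | Tt i ω ∈ A i} * P {ω | Xx i ω ∈ B i})

namespace IsMarkedPoissonProcess

variable {Ω T X : Type*} [MeasurableSpace Ω] [MeasurableSpace T] [MeasurableSpace X]
  {P : Measure Ω} {N : Ω → ℕ} {Tt : ℕ → Ω → T} {Xx : ℕ → Ω → X} {lam : Measure T}
  {ν : Measure X}

theorem measurable_points (hP : IsMarkedPoissonProcess P N Tt Xx lam ν) (j : ℕ) :
    Measurable fun ω (i : Fin j) => (Tt i ω, Xx i ω) :=
  measurable_pi_lambda _ fun i => (hP.measurable_point i).prodMk (hP.measurable_mark i)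

theorem map_restrict_count_eq [IsFiniteMeasure P] [IsFiniteMeasure lam] [NeZero lam]
    [SigmaFinite ν] (hP : IsMarkedPoissonProcess P N Tt Xx lam ν) (j : ℕ) :
    (P.restrict {ω | N ω = j}).map (fun ω (i : Fin j) => (Tt i ω, Xx i ω)) =
      P {ω | N ω = j} • Measure.pi fun _ => ((lam univ)⁻¹ • lam).prod ν := by
  have hG := hP.measurable_points j
  refine Measure.ext_of_pi_prod fun A B hA hB => ?_
  classical
  set A' : ℕ → Set T := fun i => if h : i < j then A ⟨i, h⟩ else univ
  set B' : ℕ → Set X := fun i => if h : i < j then B ⟨i, h⟩ else univ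
  have hA' : ∀ i : Fin j, A' i = A i := fun i => dif_pos i.isLt
  have hB' : ∀ i : Fin j, B' i = B i := fun i => dif_pos i.isLt
  have hA'm : ∀ i, MeasurableSet (A' i) := fun i => by
    simp only [A']; split_ifs <;> simp [hA]
  have hB'm : ∀ i, MeasurableSet (B' i) := fun i => by
    simp only [B']; split_ifs <;> simp [hB]
  have hpre : (fun ω (i : Fin j) => (Tt i ω, Xx i ω)) ⁻¹' (univ.pi fun i => A i ×ˢ B i) =
      ⋂ i ∈ Finset.range j, ({ω | Tt i ω ∈ A' i} ∩ {ω | Xx i ω ∈ B' i}) := by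
    ext ω
    simp only [mem_preimage, mem_univ_pi, mem_prod, Fin.forall_iff, mem_iInter,
      Finset.mem_range, mem_inter_iff]
    exact forall₂_congr fun i hi => by simp only [A', B', dif_pos hi]; rfl
  rw [Measure.map_apply hG (.univ_pi fun i => (hA i).prod (hB i)),
    Measure.restrict_apply (hG (.univ_pi fun i => (hA i).prod (hB i))), hpre, inter_comm,
    hP.measure_inter_eq j j A' B' hA'm hB'm, Measure.smul_apply, Measure.pi_pi, smul_eq_mul,
    Finset.prod_range]
  congr 1
  refine Finset.prod_congr rfl fun i _ => ?_
  rw [Measure.prod_prod, ← hP.map_point i, ← hP.map_mark i,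
    Measure.map_apply (hP.measurable_point i) (hA i),
    Measure.map_apply (hP.measurable_mark i) (hB i), ← hA' i, ← hB' i]
  rfl

theorem measurable_prod_range_count (hP : IsMarkedPoissonProcess P N Tt Xx lam ν)
    {ψ : T × X → ℝ} (hψ : Measurable ψ) :
    Measurable fun ω => ∏ i ∈ Finset.range (N ω), ψ (Tt i ω, Xx i ω) := by
  have : Measurable fun p : Ω × ℕ => ∏ i ∈ Finset.range p.2, ψ (Tt i p.1, Xx i p.1) :=
    measurable_from_prod_countable_left fun j =>
      Finset.measurable_prod (Finset.range j) fun i _ =>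
        hψ.comp ((hP.measurable_point i).prodMk (hP.measurable_mark i))
  exact this.comp (measurable_id.prodMk hP.measurable_count)

theorem integrable_prod_range_count [IsFiniteMeasure P]
    (hP : IsMarkedPoissonProcess P N Tt Xx lam ν) {ψ : T × X → ℝ} (hψm : Measurable ψ)
    (hψ : ∀ z, |ψ z| ≤ 1) :
    Integrable (fun ω => ∏ i ∈ Finset.range (N ω), ψ (Tt i ω, Xx i ω)) P := by
  refine .of_bound (hP.measurable_prod_range_count hψm).aestronglyMeasurable 1
    (ae_of_all _ fun ω => ?_)
  rw [norm_prod]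
  exact Finset.prod_le_one (fun _ _ => norm_nonneg _) fun i _ => hψ _

theorem setIntegral_prod_range_count [IsFiniteMeasure P] [IsFiniteMeasure lam] [NeZero lam]
    [SigmaFinite ν] (hP : IsMarkedPoissonProcess P N Tt Xx lam ν) {ψ : T × X → ℝ}
    (hψ : Measurable ψ) (j : ℕ) :
    ∫ ω in {ω | N ω = j}, ∏ i ∈ Finset.range (N ω), ψ (Tt i ω, Xx i ω) ∂P =
      P.real {ω | N ω = j} * (∫ z, ψ z ∂((lam univ)⁻¹ • lam).prod ν) ^ j := by
  calc _ = ∫ ω in {ω | N ω = j}, ∏ i : Fin j, ψ (Tt i ω, Xx i ω) ∂P :=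
        setIntegral_congr_fun (hP.measurable_count (measurableSet_singleton j)) fun ω hω => by
          rw [show N ω = j from hω, Finset.prod_range]
    _ = ∫ p, ∏ i, ψ (p i)
          ∂(P.restrict {ω | N ω = j}).map fun ω (i : Fin j) => (Tt i ω, Xx i ω) :=
        (integral_map (hP.measurable_points j).aemeasurable (Finset.measurable_prod _ fun i _ =>
          hψ.comp (measurable_pi_apply i)).aestronglyMeasurable).symm
    _ = _ := by
        rw [hP.map_restrict_count_eq, integral_smul_measure, integral_fintype_prod_eq_pow,
          Fintype.card_fin, measureReal_def, smul_eq_mul]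

theorem integral_prod_range_count [IsFiniteMeasure P] [IsFiniteMeasure lam] [NeZero lam]
    [IsProbabilityMeasure ν] (hP : IsMarkedPoissonProcess P N Tt Xx lam ν) {ψ : T × X → ℝ}
    (hψm : Measurable ψ) (hψ : ∀ z, |ψ z| ≤ 1) :
    ∫ ω, ∏ i ∈ Finset.range (N ω), ψ (Tt i ω, Xx i ω) ∂P =
      Real.exp (-∫ z, (1 - ψ z) ∂lam.prod ν) := by
  set Λ := (lam univ).toReal
  set κ := (lam univ)⁻¹ • lam
  set q := ∫ z, ψ z ∂κ.prod ν
  have hfibers : HasSum (fun j => ∫ ω in {ω | N ω = j},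
      ∏ i ∈ Finset.range (N ω), ψ (Tt i ω, Xx i ω) ∂P)
      (∫ ω, ∏ i ∈ Finset.range (N ω), ψ (Tt i ω, Xx i ω) ∂P) := by
    have h := hasSum_integral_iUnion (fun j => hP.measurable_count (measurableSet_singleton j))
      (pairwise_disjoint_fiber N) (hP.integrable_prod_range_count hψm hψ).integrableOn
    rwa [← preimage_iUnion, iUnion_of_singleton, preimage_univ, Measure.restrict_univ] at h
  have hcount : ∀ j : ℕ, P.real {ω | N ω = j} = Real.exp (-Λ) * Λ ^ j / j.factorial :=
    fun j => by rw [measureReal_def, hP.measure_count_eq, ENNReal.toReal_ofReal (by positivity)]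
  have hmean : ∫ z, (1 - ψ z) ∂lam.prod ν = Λ * (1 - q) := by
    have hlam : lam = lam univ • κ := by
      rw [smul_smul, ENNReal.mul_inv_cancel (Measure.measure_univ_ne_zero.2 (NeZero.ne _))
        (measure_ne_top _ _), one_smul]
    rw [hlam, Measure.prod_smul_left, integral_smul_measure, smul_eq_mul,
      integral_sub (integrable_const 1) (.of_bound hψm.aestronglyMeasurable 1 (ae_of_all _ hψ)),
      integral_const, probReal_univ, one_smul]
  rw [hmean, hfibers.unique]
  simpa only [hP.setIntegral_prod_range_count hψm, hcount] using
    hasSum_exp_neg_mul_pow_div_factorial_mul_pow Λ q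

theorem integral_one_sub_exp_neg_sum [IsProbabilityMeasure P] [IsFiniteMeasure lam] [NeZero lam]
    [IsProbabilityMeasure ν] (hP : IsMarkedPoissonProcess P N Tt Xx lam ν) {φ : T × X → ℝ}
    (hφm : Measurable φ) (hφ : ∀ z, 0 ≤ φ z) :
    ∫ ω, (1 - Real.exp (-∑ i ∈ Finset.range (N ω), φ (Tt i ω, Xx i ω))) ∂P =
      1 - Real.exp (-∫ x, ∫ t, (1 - Real.exp (-φ (t, x))) ∂lam ∂ν) := by
  have hψm : Measurable fun z => Real.exp (-φ z) := by fun_prop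
  have hψ : ∀ z, |Real.exp (-φ z)| ≤ 1 := fun z => by
    rw [abs_of_pos (Real.exp_pos _)]
    exact Real.exp_le_one_iff.2 (neg_nonpos.2 (hφ z))
  have hexp_sum : ∀ ω, Real.exp (-∑ i ∈ Finset.range (N ω), φ (Tt i ω, Xx i ω)) =
      ∏ i ∈ Finset.range (N ω), Real.exp (-φ (Tt i ω, Xx i ω)) := fun ω => by
    rw [← Finset.sum_neg_distrib, Real.exp_sum]
  simp_rw [hexp_sum]
  rw [integral_sub (integrable_const 1) (hP.integrable_prod_range_count hψm hψ), integral_const,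
    probReal_univ, one_smul, hP.integral_prod_range_count hψm hψ, integral_prod_symm]
  exact (integrable_const 1).sub (.of_bound hψm.aestronglyMeasurable 1 (ae_of_all _ hψ))

end IsMarkedPoissonProcess

theorem stmt_11_general
    {T : Type*} [MetricSpace T] [TopologicalSpace.SeparableSpace T]
    [MeasurableSpace T] [BorelSpace T]
    {X : Type*} [MetricSpace X]
    [MeasurableSpace X] [BorelSpace X]
    (x0 : X) (σ : ℝ → X → X)
    (hσc : ContinuousOn (fun p : ℝ × X => σ p.1 p.2) (Set.Ioi (0 : ℝ) ×ˢ Set.univ))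
    (lam : Measure T) [IsFiniteMeasure lam] (hlam0 : lam ≠ 0)
    (ν : Measure X) [IsProbabilityMeasure ν]
    (a : ℕ → ℝ) (ha : ∀ n, 0 < a n)
    (μ : Measure X)
    (hμFin : ∀ ρ > (0 : ℝ), μ {x | ρ ≤ dist x0 x} ≠ ⊤)
    (hRV : ∀ h : X → ℝ, Continuous h → (∃ C, ∀ x, |h x| ≤ C) →
      (∃ ρ > (0 : ℝ), ∀ x, dist x0 x < ρ → h x = 0) →
      Tendsto (fun n : ℕ => (n : ℝ) * ∫ x, h (σ (a n)⁻¹ x) ∂ν) atTop (𝓝 (∫ x, h x ∂μ)))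
    {Ω : Type*} [MeasurableSpace Ω] (P : Measure Ω) [IsProbabilityMeasure P]
    (N : Ω → ℕ) (hNmeas : Measurable N)
    (Tt : ℕ → Ω → T) (hTmeas : ∀ i, Measurable (Tt i))
    (Xx : ℕ → Ω → X) (hXmeas : ∀ i, Measurable (Xx i))
    (hNlaw : ∀ j : ℕ, P {ω | N ω = j} =
      ENNReal.ofReal (Real.exp (-(lam Set.univ).toReal) * (lam Set.univ).toReal ^ j /
        (Nat.factorial j : ℝ)))
    (hTlaw : ∀ i, Measure.map (Tt i) P = (lam Set.univ)⁻¹ • lam)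
    (hXlaw : ∀ i, Measure.map (Xx i) P = ν)
    (hIndep : ∀ (j n : ℕ) (A : ℕ → Set T) (B : ℕ → Set X),
      (∀ i, MeasurableSet (A i)) → (∀ i, MeasurableSet (B i)) →
      P ({ω | N ω = j} ∩ ⋂ i ∈ Finset.range n, ({ω | Tt i ω ∈ A i} ∩ {ω | Xx i ω ∈ B i}))
        = P {ω | N ω = j} *
          ∏ i ∈ Finset.range n, (P {ω | Tt i ω ∈ A i} * P {ω | Xx i ω ∈ B i}))
    (f : T × X → ℝ) (hfc : Continuous f) (hf0 : ∀ z, 0 ≤ f z)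
    (r : ℝ) (hr : 0 < r) (hfvan : ∀ t x, dist x0 x < r → f (t, x) = 0) :
    Tendsto (fun n : ℕ => (n : ℝ) *
        ∫ ω, (1 - Real.exp (-∑ i ∈ Finset.range (N ω), f (Tt i ω, σ (a n)⁻¹ (Xx i ω)))) ∂P)
      atTop (𝓝 (∫ z : T × X, (1 - Real.exp (-f z)) ∂(lam.prod μ))) := by
  have : NeZero lam := ⟨hlam0⟩
  have : SFinite μ := sFinite_of_measure_le_dist_ne_top x0 hμFin
  have hP : IsMarkedPoissonProcess P N Tt Xx lam ν :=
    ⟨hNmeas, hTmeas, hXmeas, hNlaw, hTlaw, hXlaw, hIndep⟩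
  set g : T × X → ℝ := fun z => 1 - Real.exp (-f z)
  have hg_abs : ∀ z, |g z| ≤ 1 := fun z => abs_one_sub_exp_neg_le_one (hf0 z)
  have hg_zero : ∀ t x, dist x0 x < r → g (t, x) = 0 := fun t x hx => by simp [g, hfvan t x hx]
  set h : X → ℝ := fun x => ∫ t, g (t, x) ∂lam
  have hh : Tendsto (fun n : ℕ => (n : ℝ) * ∫ x, h (σ (a n)⁻¹ x) ∂ν) atTop (𝓝 (∫ x, h x ∂μ)) :=
    hRV h (continuous_integral_of_abs_le (by fun_prop) hg_abs lam)
      ⟨lam.real univ, fun x => by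
        simpa using norm_integral_le_of_norm_le_const
          (ae_of_all lam fun t => (Real.norm_eq_abs _).trans_le (hg_abs (t, x)))⟩
      ⟨r, hr, fun x hx => by simp [h, hg_zero _ x hx]⟩
  have hσ : ∀ n, Continuous (σ (a n)⁻¹) := fun n =>
    hσc.comp_continuous (continuous_const.prodMk continuous_id)
      fun _ => ⟨inv_pos.2 (ha n), trivial⟩
  have hLaplace : ∀ n : ℕ, ∫ ω, (1 - Real.exp (-∑ i ∈ Finset.range (N ω),
      f (Tt i ω, σ (a n)⁻¹ (Xx i ω)))) ∂P = 1 - Real.exp (-∫ x, h (σ (a n)⁻¹ x) ∂ν) := fun n =>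
    hP.integral_one_sub_exp_neg_sum (φ := fun z => f (z.1, σ (a n)⁻¹ z.2))
      (hfc.comp (continuous_fst.prodMk ((hσ n).comp continuous_snd))).measurable fun z => hf0 _
  rw [integral_prod_symm g (integrable_prod_of_eq_zero_of_dist_lt (hμFin r hr)
    (by fun_prop : Continuous g).aestronglyMeasurable hg_abs hg_zero)]
  simpa only [hLaplace] using tendsto_nat_mul_one_sub_exp_neg hh

/-- Regular variation of marked Poisson point processes, Laplace-functional form,
case `k = 0` (Theorem 3.1 of the paper). -/
theorem stmt_11
    {T : Type*} [MetricSpace T] [CompleteSpace T] [TopologicalSpace.SeparableSpace T]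
    [MeasurableSpace T] [BorelSpace T]
    {X : Type*} [MetricSpace X] [CompleteSpace X] [TopologicalSpace.SeparableSpace X]
    [MeasurableSpace X] [BorelSpace X]
    (x0 : X) (σ : ℝ → X → X)
    (hσc : ContinuousOn (fun p : ℝ × X => σ p.1 p.2) (Set.Ioi (0 : ℝ) ×ˢ Set.univ))
    (hσ1 : ∀ x, σ 1 x = x)
    (hσm : ∀ u v : ℝ, 0 < u → 0 < v → ∀ x, σ u (σ v x) = σ (u * v) x)
    (hσ0 : ∀ u : ℝ, 0 < u → σ u x0 = x0)
    (lam : Measure T) [IsFiniteMeasure lam] (hlam0 : lam ≠ 0)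
    (ν : Measure X) [IsProbabilityMeasure ν] (hν0 : ν {x0} = 0)
    (a : ℕ → ℝ) (ha : ∀ n, 0 < a n) (haTop : Tendsto a atTop atTop)
    (μ : Measure X) (hμ0 : μ ≠ 0)
    (hμFin : ∀ ρ > (0 : ℝ), μ {x | ρ ≤ dist x0 x} ≠ ⊤)
    (hRV : ∀ h : X → ℝ, Continuous h → (∃ C, ∀ x, |h x| ≤ C) →
      (∃ ρ > (0 : ℝ), ∀ x, dist x0 x < ρ → h x = 0) →
      Tendsto (fun n : ℕ => (n : ℝ) * ∫ x, h (σ (a n)⁻¹ x) ∂ν) atTop (𝓝 (∫ x, h x ∂μ)))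
    {Ω : Type*} [MeasurableSpace Ω] (P : Measure Ω) [IsProbabilityMeasure P]
    (N : Ω → ℕ) (hNmeas : Measurable N)
    (Tt : ℕ → Ω → T) (hTmeas : ∀ i, Measurable (Tt i))
    (Xx : ℕ → Ω → X) (hXmeas : ∀ i, Measurable (Xx i))
    (hNlaw : ∀ j : ℕ, P {ω | N ω = j} =
      ENNReal.ofReal (Real.exp (-(lam Set.univ).toReal) * (lam Set.univ).toReal ^ j /
        (Nat.factorial j : ℝ)))
    (hTlaw : ∀ i, Measure.map (Tt i) P = (lam Set.univ)⁻¹ • lam)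
    (hXlaw : ∀ i, Measure.map (Xx i) P = ν)
    (hIndep : ∀ (j n : ℕ) (A : ℕ → Set T) (B : ℕ → Set X),
      (∀ i, MeasurableSet (A i)) → (∀ i, MeasurableSet (B i)) →
      P ({ω | N ω = j} ∩ ⋂ i ∈ Finset.range n, ({ω | Tt i ω ∈ A i} ∩ {ω | Xx i ω ∈ B i}))
        = P {ω | N ω = j} *
          ∏ i ∈ Finset.range n, (P {ω | Tt i ω ∈ A i} * P {ω | Xx i ω ∈ B i}))
    (f : T × X → ℝ) (hfc : Continuous f) (hf0 : ∀ z, 0 ≤ f z) (hfb : ∃ C, ∀ z, f z ≤ C)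
    (r : ℝ) (hr : 0 < r) (hfvan : ∀ t x, dist x0 x < r → f (t, x) = 0) :
    Tendsto (fun n : ℕ => (n : ℝ) *
        ∫ ω, (1 - Real.exp (-∑ i ∈ Finset.range (N ω), f (Tt i ω, σ (a n)⁻¹ (Xx i ω)))) ∂P)
      atTop (𝓝 (∫ z : T × X, (1 - Real.exp (-f z)) ∂(lam.prod μ))) :=
  stmt_11_general x0 σ hσc lam hlam0 ν a ha μ hμFin hRV P N hNmeas Tt hTmeas Xx hXmeas hNlaw hTlaw
    hXlaw hIndep f hfc hf0 r hr hfvan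
end

section
/- Let k ≥ 0 be an integer, let N be an ℕ-valued random variable with E[N^{k+1}] < ∞, let q ∈ [0,∞), and let (p_n)_{n ≥ 1} ⊆ [0,1] with n·p_n → q as n → ∞. Then n^{k+1}·Σ_{j=0}^{∞} P(N = j)·(Σ_{i=k+1}^{j} (j choose i)·p_n^i·(1−p_n)^{j−i}) → (q^{k+1}/(k+1)!)·E[N·(N−1)⋯(N−k)] as n → ∞. Equivalently, if S_n is binomial with parameters (N,p_n) conditionally on N, then n^{k+1}·P(S_n ≥ k+1) → (q^{k+1}/(k+1)!)·E[N^{[k+1]}], where N^{[k+1]} = N·(N−1)⋯(N−k) is the (k+1)-th descending factorial of N. -/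
/-!
Let `m = k + 1` and `binomialTail j m x = P(Bin(j, x) ≥ m)`. Comparing `C(j, i)` with
`C(j, m) C(j - m, i - m)` gives `binomialTail j m x ≤ C(j, m) x^m`, while
`n^m binomialTail j m (p n) → q^m C(j, m)` for each fixed `j` because only the `i = m` term
survives `p n → 0`. Since `n p_n` is bounded by some `M`, the `j`-th term of the mixture is
dominated by `M^m P(N = j) j^m`, which is summable by the moment assumption, so dominated
convergence for series gives the limit `q^m E[C(N, m)]`, and `m! C(N, m) = N(N-1)⋯(N-m+1)`.
-/

open MeasureTheory Filter Topology Finset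

noncomputable def binomialTail (j m : ℕ) (x : ℝ) : ℝ :=
  ∑ i ∈ Icc m j, (j.choose i : ℝ) * x ^ i * (1 - x) ^ (j - i)

lemma Nat.choose_le_choose_mul_choose_sub {j m i : ℕ} (hmi : m ≤ i) :
    j.choose i ≤ j.choose m * (j - m).choose (i - m) := by
  rw [← Nat.choose_mul hmi]
  exact Nat.le_mul_of_pos_right _ (Nat.choose_pos hmi)

lemma binomialTail_le_choose_mul_pow (j m : ℕ) {x : ℝ} (hx0 : 0 ≤ x) (hx1 : x ≤ 1) :
    binomialTail j m x ≤ j.choose m * x ^ m := by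
  have h1x : 0 ≤ 1 - x := by linarith
  rcases lt_or_ge j m with hjm | hmj
  · simp [binomialTail, Icc_eq_empty_of_lt hjm, Nat.choose_eq_zero_of_lt hjm]
  calc binomialTail j m x
      ≤ ∑ i ∈ Icc m j,
          (j.choose m * (j - m).choose (i - m) : ℝ) * x ^ i * (1 - x) ^ (j - i) := by
        refine sum_le_sum fun i hi => ?_
        gcongr
        exact_mod_cast Nat.choose_le_choose_mul_choose_sub (mem_Icc.mp hi).1
    _ = j.choose m * x ^ m * ∑ l ∈ range (j - m + 1),
          x ^ l * (1 - x) ^ (j - m - l) * (j - m).choose l := by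
        rw [← Ico_add_one_right_eq_Icc, sum_Ico_eq_sum_range, mul_sum,
          show j + 1 - m = j - m + 1 by omega]
        refine sum_congr rfl fun l _ => ?_
        rw [show j - (m + l) = j - m - l by omega, Nat.add_sub_cancel_left, pow_add]
        ring
    _ = j.choose m * x ^ m := by rw [← add_pow, add_sub_cancel, one_pow, mul_one]

lemma binomialTail_nonneg (j m : ℕ) {x : ℝ} (hx0 : 0 ≤ x) (hx1 : x ≤ 1) :
    0 ≤ binomialTail j m x := by
  have h1x : 0 ≤ 1 - x := by linarith
  unfold binomialTail
  positivity

lemma binomialTail_eq_pow_mul (j m : ℕ) (x : ℝ) :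
    binomialTail j m x =
      x ^ m * ∑ i ∈ Icc m j, (j.choose i : ℝ) * x ^ (i - m) * (1 - x) ^ (j - i) := by
  rw [binomialTail, mul_sum]
  refine sum_congr rfl fun i hi => ?_
  obtain ⟨l, rfl⟩ := Nat.exists_eq_add_of_le (mem_Icc.mp hi).1
  rw [Nat.add_sub_cancel_left, pow_add]
  ring

lemma sum_choose_mul_zero_pow_sub (j m : ℕ) :
    ∑ i ∈ Icc m j, (j.choose i : ℝ) * 0 ^ (i - m) * (1 - 0) ^ (j - i) = j.choose m := by
  rw [sum_eq_single m]
  · simp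
  · intro i hi him
    rw [zero_pow (by grind)]
    ring
  · intro hm
    rw [Nat.choose_eq_zero_of_lt (by grind)]
    simp

lemma tendsto_zero_of_tendsto_natCast_mul {p : ℕ → ℝ} {q : ℝ}
    (h : Tendsto (fun n : ℕ => (n : ℝ) * p n) atTop (𝓝 q)) : Tendsto p atTop (𝓝 0) := by
  refine (h.div_atTop tendsto_natCast_atTop_atTop).congr' ?_
  filter_upwards [eventually_ne_atTop 0] with n hn
  field_simp

lemma tendsto_pow_mul_binomialTail {p : ℕ → ℝ} {q : ℝ}
    (h : Tendsto (fun n : ℕ => (n : ℝ) * p n) atTop (𝓝 q)) (j m : ℕ) :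
    Tendsto (fun n : ℕ => (n : ℝ) ^ m * binomialTail j m (p n)) atTop
      (𝓝 (q ^ m * j.choose m)) := by
  have hp := tendsto_zero_of_tendsto_natCast_mul h
  have hcont : Continuous fun x : ℝ =>
      ∑ i ∈ Icc m j, (j.choose i : ℝ) * x ^ (i - m) * (1 - x) ^ (j - i) := by fun_prop
  have := (h.pow m).mul ((hcont.tendsto 0).comp hp)
  rw [sum_choose_mul_zero_pow_sub] at this
  refine this.congr fun n => ?_
  simp only [Function.comp, binomialTail_eq_pow_mul, mul_pow]
  ring

lemma pow_mul_binomialTail_le {y x M : ℝ} (hy : 0 ≤ y) (hx0 : 0 ≤ x) (hx1 : x ≤ 1)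
    (hyx : y * x ≤ M) (j m : ℕ) :
    y ^ m * binomialTail j m x ≤ M ^ m * (j : ℝ) ^ m := by
  have hyx0 : 0 ≤ y * x := mul_nonneg hy hx0
  calc y ^ m * binomialTail j m x ≤ y ^ m * (j.choose m * x ^ m) := by
        gcongr; exact binomialTail_le_choose_mul_pow j m hx0 hx1
    _ = (y * x) ^ m * j.choose m := by ring
    _ ≤ M ^ m * (j : ℝ) ^ m :=
        mul_le_mul (pow_le_pow_left₀ hyx0 hyx m) (mod_cast Nat.choose_le_pow j m) (by positivity)
          (pow_nonneg (hyx0.trans hyx) m)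

lemma prod_range_natCast_sub_eq_factorial_mul_choose (j k : ℕ) :
    ∏ m ∈ range k, ((j : ℝ) - m) = k.factorial * j.choose k := by
  rw [← descPochhammer_eval_eq_prod_range, descPochhammer_eval_eq_descFactorial,
    Nat.descFactorial_eq_factorial_mul_choose, Nat.cast_mul]

section LawOfNatValued

variable {Ω : Type*} [MeasurableSpace Ω] {P : Measure Ω} {N : Ω → ℕ} {f : ℕ → ℝ}

lemma integrable_map_nat_iff (hN : Measurable N) :
    Integrable f (P.map N) ↔ Integrable (fun ω => f (N ω)) P :=
  integrable_map_measure measurable_from_nat.aestronglyMeasurable hN.aemeasurable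

lemma measureReal_map_singleton_nat (hN : Measurable N) (j : ℕ) :
    (P.map N).real {j} = P.real {ω | N ω = j} := by
  rw [measureReal_def, Measure.map_apply hN (measurableSet_singleton j)]
  rfl

lemma summable_measureReal_mul_norm_of_integrable (hN : Measurable N)
    (hf : Integrable (fun ω => f (N ω)) P) :
    Summable fun j => P.real {ω | N ω = j} * ‖f j‖ := by
  rw [← integrable_map_nat_iff hN, ← Measure.sum_smul_dirac (P.map N)] at hf
  simpa [← measureReal_def, measureReal_map_singleton_nat hN] using hf.summable_of_dirac

lemma integral_comp_nat_eq_tsum (hN : Measurable N) (hf : Integrable (fun ω => f (N ω)) P) :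
    ∫ ω, f (N ω) ∂P = ∑' j, P.real {ω | N ω = j} * f j := by
  rw [← integral_map hN.aemeasurable measurable_from_nat.aestronglyMeasurable,
    integral_countable ((integrable_map_nat_iff hN).mpr hf)]
  simp only [measureReal_map_singleton_nat hN, smul_eq_mul]

lemma integral_prod_range_sub_eq_factorial_mul_tsum {m : ℕ} (hN : Measurable N)
    (hmom : Integrable (fun ω => (N ω : ℝ) ^ m) P) :
    ∫ ω, ∏ i ∈ range m, ((N ω : ℝ) - i) ∂P =
      m.factorial * ∑' j, P.real {ω | N ω = j} * j.choose m := by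
  have hchoose : Integrable (fun ω => ((N ω).choose m : ℝ)) P :=
    hmom.mono'
      ((measurable_from_nat (f := fun j => (j.choose m : ℝ))).comp hN).aestronglyMeasurable
      (ae_of_all _ fun ω => by simpa using (Nat.cast_le (α := ℝ)).mpr (Nat.choose_le_pow _ _))
  simp_rw [prod_range_natCast_sub_eq_factorial_mul_choose, integral_const_mul,
    integral_comp_nat_eq_tsum (f := fun j => (j.choose m : ℝ)) hN hchoose]

end LawOfNatValued

theorem stmt_17_general
    {Ω : Type*} [MeasurableSpace Ω] (P : Measure Ω)
    (k : ℕ) (N : Ω → ℕ) (hNmeas : Measurable N)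
    (hNmom : Integrable (fun ω => (N ω : ℝ) ^ (k + 1)) P)
    (q : ℝ) (p : ℕ → ℝ) (hp0 : ∀ n, 0 ≤ p n) (hp1 : ∀ n, p n ≤ 1)
    (hconv : Tendsto (fun n : ℕ => (n : ℝ) * p n) atTop (𝓝 q)) :
    Tendsto (fun n : ℕ => (n : ℝ) ^ (k + 1) *
        ∑' j : ℕ, (P {ω | N ω = j}).toReal *
          ∑ i ∈ Finset.Icc (k + 1) j,
            (j.choose i : ℝ) * p n ^ i * (1 - p n) ^ (j - i))
      atTop
      (𝓝 (q ^ (k + 1) / (Nat.factorial (k + 1) : ℝ) *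
        ∫ ω, ∏ m ∈ Finset.range (k + 1), ((N ω : ℝ) - (m : ℝ)) ∂P)) := by
  obtain ⟨M, hM⟩ := hconv.bddAbove_range
  have hbound : ∀ (n : ℕ) j,
      ‖P.real {ω | N ω = j} * ((n : ℝ) ^ (k + 1) * binomialTail j (k + 1) (p n))‖ ≤
        M ^ (k + 1) * (P.real {ω | N ω = j} * ‖(j : ℝ) ^ (k + 1)‖) := fun n j => by
    have htail := binomialTail_nonneg j (k + 1) (hp0 n) (hp1 n)
    rw [Real.norm_of_nonneg (by positivity), Real.norm_of_nonneg (by positivity),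
      mul_left_comm (M ^ (k + 1))]
    exact mul_le_mul_of_nonneg_left
      (pow_mul_binomialTail_le n.cast_nonneg (hp0 n) (hp1 n) (hM ⟨n, rfl⟩) j (k + 1))
      measureReal_nonneg
  have hlimit := tendsto_tsum_of_dominated_convergence
    ((summable_measureReal_mul_norm_of_integrable (f := fun j => (j : ℝ) ^ (k + 1))
      hNmeas hNmom).mul_left (M ^ (k + 1)))
    (fun j => (tendsto_pow_mul_binomialTail hconv j (k + 1)).const_mul _)
    (Eventually.of_forall hbound)
  rw [integral_prod_range_sub_eq_factorial_mul_tsum hNmeas hNmom]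
  convert hlimit using 2 with n
  · simp only [binomialTail, ← tsum_mul_left, measureReal_def]
    exact tsum_congr fun j => by ring
  · rw [← tsum_mul_left, ← tsum_mul_left]
    exact tsum_congr fun j => by field_simp

/-- Mixed binomial tail asymptotics: if `n·p_n → q` and `S_n` is binomial with
parameters `(N, p_n)` conditionally on `N`, then
`n^{k+1}·P(S_n ≥ k+1) → (q^{k+1}/(k+1)!)·E[N(N−1)⋯(N−k)]`
(established in the proofs of Theorem 3.2 and Proposition 4.4 of the paper). -/
theorem stmt_17
    {Ω : Type*} [MeasurableSpace Ω] (P : Measure Ω) [IsProbabilityMeasure P]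
    (k : ℕ) (N : Ω → ℕ) (hNmeas : Measurable N)
    (hNmom : Integrable (fun ω => (N ω : ℝ) ^ (k + 1)) P)
    (q : ℝ) (hq : 0 ≤ q) (p : ℕ → ℝ) (hp0 : ∀ n, 0 ≤ p n) (hp1 : ∀ n, p n ≤ 1)
    (hconv : Tendsto (fun n : ℕ => (n : ℝ) * p n) atTop (𝓝 q)) :
    Tendsto (fun n : ℕ => (n : ℝ) ^ (k + 1) *
        ∑' j : ℕ, (P {ω | N ω = j}).toReal *
          ∑ i ∈ Finset.Icc (k + 1) j,
            (j.choose i : ℝ) * p n ^ i * (1 - p n) ^ (j - i))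
      atTop
      (𝓝 (q ^ (k + 1) / (Nat.factorial (k + 1) : ℝ) *
        ∫ ω, ∏ m ∈ Finset.range (k + 1), ((N ω : ℝ) - (m : ℝ)) ∂P)) :=
  stmt_17_general P k N hNmeas hNmom q p hp0 hp1 hconv
end
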